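/- arXiv:math/0607037 — 8 statements merged into one kernel-verified Lean document; each statement's English description precedes it below -/
import Mathlib

section
/- If a graph H (with both directed and undirected edges) is obtained from a graph K by converting every arrow that lies on some semi-directed cycle of K into a line, then H contains no semi-directed cycle all of whose arrows already occurred as arrows in K that did not lie on any semi-directed cycle of K. Consequently, H is a chain graph (contains no semi-directed cycle). -/
/-- A mixed graph: directed edges (arrows) and undirected edges (lines),
no loops, at most one edge between any two vertices. -/
structure MixedGraph (V : Type) where
  arrow : V → V → Prop
  line : V → V → Prop
  line_symm : ∀ a b, line a b → line b a
  arrow_irrefl : ∀ a, ¬ arrow a a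
  line_irrefl : ∀ a, ¬ line a a
  not_arrow_line : ∀ a b, arrow a b → ¬ line a b
  not_arrow_arrow : ∀ a b, arrow a b → ¬ arrow b a

namespace MixedGraph

variable {V : Type}

/-- `a` and `b` are adjacent (joined by some edge). -/
def adj (G : MixedGraph V) (a b : V) : Prop := G.arrow a b ∨ G.arrow b a ∨ G.line a b

/-- A step of a semi-directed path: a forward arrow or a line. -/
def step (G : MixedGraph V) (a b : V) : Prop := G.arrow a b ∨ G.line a b

/-- A semi-directed cycle of length `k ≥ 3`: `v 0, …, v k` with `v k = v 0`,
each step an arrow or a line, at least one arrow, vertices distinct. -/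
def IsSemiDirectedCycle (G : MixedGraph V) (k : ℕ) (v : ℕ → V) : Prop :=
  3 ≤ k ∧ v k = v 0 ∧ (∀ i, i < k → G.step (v i) (v (i + 1))) ∧
    (∃ i, i < k ∧ G.arrow (v i) (v (i + 1))) ∧
    (∀ i j, i < j → j < k → v i ≠ v j)

/-- A chain graph is a mixed graph with no semi-directed cycle. -/
def IsChainGraph (G : MixedGraph V) : Prop := ∀ k v, ¬ G.IsSemiDirectedCycle k v

/-- A triplex `({a,c}, b)`: `a, c` nonadjacent and the induced subgraph on `{a,b,c}`
is `a→b←c`, `a→b−c`, or `a−b←c`. -/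
def triplex (G : MixedGraph V) (a b c : V) : Prop :=
  a ≠ c ∧ ¬ G.adj a c ∧
    ((G.arrow a b ∧ G.arrow c b) ∨ (G.arrow a b ∧ G.line b c) ∨ (G.line a b ∧ G.arrow c b))

def sameSkeleton (G H : MixedGraph V) : Prop := ∀ a b, G.adj a b ↔ H.adj a b

def sameTriplexes (G H : MixedGraph V) : Prop := ∀ a b c, G.triplex a b c ↔ H.triplex a b c

end MixedGraph

/-- The arrow `a→b` of `K` lies on some semi-directed cycle of `K`. -/
def MixedGraph.arrowOnCycle {V : Type} (K : MixedGraph V) (a b : V) : Prop :=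
  ∃ k v, K.IsSemiDirectedCycle k v ∧ ∃ i, i < k ∧ v i = a ∧ v (i + 1) = b

/-!
Every step `x → y` or `x − y` of `H` can be followed in `K` from `x` to `y`: an arrow or line of
`H` is an edge of `K` in that direction, except for a line coming from an arrow `y → x` of `K` on a
semi-directed cycle of `K`, in which case the rest of that cycle leads from `x` to `y`. So if an
arrow `a → b` of `H` is a `K`-arrow and `H` has a semi-directed cycle through it, `K` has a
semi-directed walk from `b` back to `a`; shortening it to a path and closing it with `a → b` puts
`a → b` on a semi-directed cycle of `K`.
-/

open Relation

section Chain

variable {α : Type*} {r : α → α → Prop} {c : ℕ → α} {m : ℕ}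

lemma reflTransGen_of_chain (h : ∀ i < m, r (c i) (c (i + 1))) {i j : ℕ} (hij : i ≤ j)
    (hjm : j ≤ m) : ReflTransGen r (c i) (c j) := by
  induction j, hij using Nat.le_induction with
  | base => exact .refl
  | succ j hij ih => exact (ih (by omega)).tail (h j (by omega))

lemma reflTransGen_of_closed_chain (h : ∀ i < m, r (c i) (c (i + 1))) (hc : c m = c 0)
    {p : ℕ} (hp : p < m) : ReflTransGen r (c (p + 1)) (c p) := by
  have hfrom : ReflTransGen r (c (p + 1)) (c m) := reflTransGen_of_chain h hp le_rfl
  rw [hc] at hfrom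
  exact hfrom.trans (reflTransGen_of_chain h p.zero_le hp.le)

end Chain

namespace MixedGraph

variable {V : Type} (G : MixedGraph V)

def IsPath (n : ℕ) (w : ℕ → V) : Prop :=
  (∀ i < n, G.step (w i) (w (i + 1))) ∧ ∀ i j, i < j → j ≤ n → w i ≠ w j

variable {G}

lemma IsPath.mono {n m : ℕ} {w : ℕ → V} (hw : G.IsPath n w) (hmn : m ≤ n) : G.IsPath m w :=
  ⟨fun i hi => hw.1 i (by omega), fun i j hij hj => hw.2 i j hij (by omega)⟩

lemma IsPath.snoc {n : ℕ} {w : ℕ → V} {z : V} (hw : G.IsPath n w) (hz : G.step (w n) z)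
    (hnew : ∀ i ≤ n, w i ≠ z) : G.IsPath (n + 1) (Function.update w (n + 1) z) := by
  have hold : ∀ i ≤ n, Function.update w (n + 1) z i = w i :=
    fun i hi => Function.update_of_ne (by omega) _ _
  refine ⟨fun i hi => ?_, fun i j hij hj => ?_⟩
  · rw [hold i (by omega)]
    rcases Nat.lt_succ_iff_lt_or_eq.mp hi with hi | rfl
    · rw [hold (i + 1) hi]
      exact hw.1 i hi
    · rwa [Function.update_self]
  · rw [hold i (by omega)]
    rcases Nat.lt_succ_iff_lt_or_eq.mp (Nat.lt_succ_of_le hj) with hj | rfl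
    · rw [hold j (by omega)]
      exact hw.2 i j hij (by omega)
    · rw [Function.update_self]
      exact hnew i (by omega)

lemma exists_isPath_of_reflTransGen {x y : V} (h : ReflTransGen G.step x y) :
    ∃ n w, G.IsPath n w ∧ w 0 = x ∧ w n = y := by
  induction h with
  | refl => exact ⟨0, fun _ => x, ⟨fun i hi => absurd hi i.not_lt_zero, by omega⟩, rfl, rfl⟩
  | @tail y z _ hyz ih =>
    obtain ⟨n, w, hw, hw0, hwn⟩ := ih
    -- if the walk returns to an earlier vertex of the path, cut the path back to it
    by_cases hvisited : ∃ i ≤ n, w i = z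
    · obtain ⟨i, hi, hwi⟩ := hvisited
      exact ⟨i, w, hw.mono hi, hw0, hwi⟩
    · push Not at hvisited
      refine ⟨n + 1, _, hw.snoc (hwn ▸ hyz) hvisited, ?_, Function.update_self ..⟩
      rwa [Function.update_of_ne (by omega)]

lemma reflTransGen_of_arrowOnCycle {a b : V} (h : G.arrowOnCycle a b) :
    ReflTransGen G.step b a := by
  obtain ⟨k, v, ⟨-, hclosed, hstep, -, -⟩, i, hi, rfl, rfl⟩ := h
  exact reflTransGen_of_closed_chain hstep hclosed hi

lemma arrowOnCycle_of_reflTransGen {a b : V} (hab : G.arrow a b)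
    (h : ReflTransGen G.step b a) : G.arrowOnCycle a b := by
  obtain ⟨n, w, ⟨hstep, hdistinct⟩, hw0, hwn⟩ := exists_isPath_of_reflTransGen h
  have hn : 2 ≤ n := by
    rcases n with _ | _ | n
    · exact absurd (hw0.symm.trans hwn) (fun hba => G.arrow_irrefl a (hba ▸ hab))
    · rcases hw0 ▸ hwn ▸ hstep 0 one_pos with hba | hba
      · exact absurd hba (G.not_arrow_arrow a b hab)
      · exact absurd (G.line_symm b a hba) (G.not_arrow_line a b hab)
    · omega
  have hab0 : G.arrow a (w 0) := hw0 ▸ hab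
  let c : ℕ → V := fun t => match t with
    | 0 => a
    | t + 1 => w t
  refine ⟨n + 1, c, ⟨by omega, hwn, fun i hi => ?_, ⟨0, by omega, hab0⟩, ?_⟩,
    0, by omega, rfl, hw0⟩
  · rcases i with _ | i
    · exact .inl hab0
    · exact hstep i (by omega)
  · rintro (_ | i) (_ | j) hij hj
    · omega
    · exact fun haw => hdistinct j n (by omega) le_rfl (hwn.trans haw).symm
    · omega
    · exact hdistinct i j (by omega) (by omega)

end MixedGraph

open MixedGraph in
/-- If `H = K°` is obtained from `K` by converting every arrow lying on a semi-directed
cycle of `K` into a line, then `H` has no semi-directed cycle all of whose arrows were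
arrows of `K` lying on no semi-directed cycle of `K`; consequently `H` is a chain graph. -/
theorem stmt0 {V : Type} (K H : MixedGraph V)
    (hA : ∀ a b, H.arrow a b ↔ K.arrow a b ∧ ¬ K.arrowOnCycle a b)
    (hL : ∀ a b, H.line a b ↔
      K.line a b ∨ (K.arrow a b ∧ K.arrowOnCycle a b) ∨ (K.arrow b a ∧ K.arrowOnCycle b a)) :
    (∀ k v, ¬ (H.IsSemiDirectedCycle k v ∧
      ∀ i, i < k → H.arrow (v i) (v (i + 1)) →
        K.arrow (v i) (v (i + 1)) ∧ ¬ K.arrowOnCycle (v i) (v (i + 1)))) ∧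
    H.IsChainGraph := by
  have hreach : ∀ x y, H.step x y → (H.arrow x y → K.arrow x y) → ReflTransGen K.step x y := by
    rintro x y (hxy | hxy) hK
    · exact .single (.inl (hK hxy))
    · rcases (hL x y).mp hxy with h | ⟨h, -⟩ | ⟨-, h⟩
      · exact .single (.inr h)
      · exact .single (.inl h)
      · exact reflTransGen_of_arrowOnCycle h
  have hmain : ∀ k v, ¬ (H.IsSemiDirectedCycle k v ∧
      ∀ i, i < k → H.arrow (v i) (v (i + 1)) →
        K.arrow (v i) (v (i + 1)) ∧ ¬ K.arrowOnCycle (v i) (v (i + 1))) := by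
    rintro k v ⟨⟨-, hclosed, hstep, ⟨i, hi, harrow⟩, -⟩, hK⟩
    obtain ⟨hKarrow, hoff⟩ := hK i hi harrow
    refine hoff (arrowOnCycle_of_reflTransGen hKarrow ?_)
    rw [← reflTransGen_eq_self (r := ReflTransGen K.step)]
    exact reflTransGen_of_closed_chain
      (fun j hj => hreach _ _ (hstep j hj) fun h => (hK j hj h).1) hclosed hi
  exact ⟨hmain, fun k v hcyc => hmain k v ⟨hcyc, fun i _ h => (hA _ _).mp h⟩⟩
end

section
/- In a connected chordal undirected graph, the orientation of the edges produced by maximum cardinality search (numbering vertices 1,…,n, always choosing next a vertex with the most already-numbered neighbors, and orienting each edge from the lower-numbered to the higher-numbered endpoint) is acyclic and creates no immorality: there is no induced subgraph a→b←c with a,c nonadjacent. -/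
/-- A chordless cycle of length `n ≥ 4` in an undirected graph: distinct vertices,
consecutive (mod `n`) vertices adjacent, nonconsecutive vertices nonadjacent. -/
def IsChordlessCycle {V : Type} (G : SimpleGraph V) (n : ℕ) (v : ℕ → V) : Prop :=
  4 ≤ n ∧ (∀ i, i < n → ∀ j, j < n → i ≠ j → v i ≠ v j) ∧
    (∀ i, i < n → G.Adj (v i) (v ((i + 1) % n))) ∧
    (∀ i, i < n → ∀ j, j < n → i ≠ j → (i + 1) % n ≠ j → (j + 1) % n ≠ i →
      ¬ G.Adj (v i) (v j))

/-- An undirected graph is chordal if it has no chordless cycle of length ≥ 4. -/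
def Chordal {V : Type} (G : SimpleGraph V) : Prop := ∀ n v, ¬ IsChordlessCycle G n v

/-- `f` is a maximum cardinality search numbering of `G`: an injective numbering such
that each vertex, when numbered, has at least as many previously numbered neighbors
as any vertex not yet numbered. -/
def IsMCSNumbering {V : Type} [Fintype V] (G : SimpleGraph V) (f : V → ℕ) : Prop :=
  Function.Injective f ∧
    ∀ v w : V, f v ≤ f w →
      {u : V | G.Adj u w ∧ f u < f v}.ncard ≤ {u : V | G.Adj u v ∧ f u < f v}.ncard

lemma mcs_exchange {V : Type} [Fintype V] (G : SimpleGraph V) (f : V → ℕ)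
    (hf : IsMCSNumbering G f)
    {v w a : V} (hvw : f v ≤ f w) (haw : G.Adj a w) (hav : f a < f v)
    (hnav : ¬ G.Adj a v) :
    ∃ d, G.Adj d v ∧ f d < f v ∧ ¬ G.Adj d w := by
  by_contra hcon
  push_neg at hcon
  have hsub : {u : V | G.Adj u v ∧ f u < f v} ⊆ {u : V | G.Adj u w ∧ f u < f v} := by
    rintro u ⟨h1, h2⟩
    exact ⟨hcon u h1 h2, h2⟩
  have hfin : {u : V | G.Adj u w ∧ f u < f v}.Finite := Set.toFinite _
  have heq : {u : V | G.Adj u v ∧ f u < f v} = {u : V | G.Adj u w ∧ f u < f v} :=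
    Set.eq_of_subset_of_ncard_le hsub (hf.2 v w hvw) hfin
  have hmem : a ∈ {u : V | G.Adj u w ∧ f u < f v} := ⟨haw, hav⟩
  rw [← heq] at hmem
  exact hnav hmem.1

lemma no_bad_path {V : Type} [Fintype V] (G : SimpleGraph V) (hch : Chordal G)
    (f : V → ℕ) (hf : IsMCSNumbering G f) :
    ∀ (N m : ℕ) (p : ℕ → V), f (p m) < N → 2 ≤ m →
      (∀ j k, j ≤ m → k ≤ m → j ≠ k → p j ≠ p k) →
      (∀ j, j < m → G.Adj (p j) (p (j + 1))) →
      (∀ j k, k ≤ m → j + 1 < k → ¬ G.Adj (p j) (p k)) →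
      f (p 0) < f (p m) →
      (∀ j, 1 ≤ j → j < m → f (p m) < f (p j)) → False := by
  intro N
  induction N with
  | zero => intro m p h; omega
  | succ N ih =>
    intro m p hN hm hinj hadj hnadj hfirst hmin
    -- exchange step with v = p m, w = p 1, witness a = p 0
    obtain ⟨d, hd1, hd2, hd3⟩ : ∃ d, G.Adj d (p m) ∧ f d < f (p m) ∧ ¬ G.Adj d (p 1) :=
      mcs_exchange G f hf (le_of_lt (hmin 1 le_rfl (by omega)))
        (hadj 0 (by omega)) hfirst (hnadj 0 m le_rfl (by omega))
    have hfd_lt : ∀ j, 1 ≤ j → j ≤ m → f d < f (p j) := by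
      intro j h1 h2
      rcases eq_or_lt_of_le h2 with h | h
      · rw [h]; exact hd2
      · exact lt_trans hd2 (hmin j h1 h)
    have hd_ne : ∀ j, 1 ≤ j → j ≤ m → d ≠ p j := by
      intro j h1 h2 he
      have := hfd_lt j h1 h2
      rw [he] at this
      exact lt_irrefl _ this
    have hd_ne0 : d ≠ p 0 := by
      intro he
      rw [he] at hd1
      exact hnadj 0 m le_rfl (by omega) hd1
    have hp0_lt : ∀ l, 1 ≤ l → l ≤ m → f (p 0) < f (p l) := by
      intro l h1 h2
      rcases eq_or_lt_of_le h2 with h | h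
      · rw [h]; exact hfirst
      · exact lt_trans hfirst (hmin l h1 h)
    -- minimal index i0 ≥ 1 with d adjacent to p i0
    have hdec : DecidablePred (fun i => 1 ≤ i ∧ G.Adj d (p i)) := Classical.decPred _
    have hex : ∃ i, 1 ≤ i ∧ G.Adj d (p i) := ⟨m, by omega, hd1⟩
    obtain ⟨i0, hi0ge1, hi0adj, hi0le, hi0min⟩ :
        ∃ i0, 1 ≤ i0 ∧ G.Adj d (p i0) ∧ i0 ≤ m ∧
          ∀ j, 1 ≤ j → j < i0 → ¬ G.Adj d (p j) :=
      ⟨Nat.find hex, (Nat.find_spec hex).1, (Nat.find_spec hex).2,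
        Nat.find_le ⟨by omega, hd1⟩,
        fun j h1 h2 h3 => Nat.find_min hex h2 ⟨h1, h3⟩⟩
    have hi0ge2 : 2 ≤ i0 := by
      rcases Nat.lt_or_ge i0 2 with h | h
      · have : i0 = 1 := by omega
        rw [this] at hi0adj
        exact absurd hi0adj hd3
      · exact h
    by_cases h0 : G.Adj d (p 0)
    · -- chordless cycle p 0, p 1, ..., p i0, d of length i0 + 2
      set n := i0 + 2 with hndef
      set c : ℕ → V := fun j => if j ≤ i0 then p j else d with hcdef
      have hc_lt : ∀ j, j ≤ i0 → c j = p j := fun j h => if_pos h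
      have hc_last : c (i0 + 1) = d := if_neg (by omega)
      apply hch n c
      refine ⟨by omega, ?_, ?_, ?_⟩
      · intro i hi j hj hne
        simp only [hcdef]
        split_ifs with h1 h2 h2
        · exact hinj i j (by omega) (by omega) hne
        · intro he
          rcases Nat.eq_zero_or_pos i with h | h
          · rw [h] at he; exact hd_ne0 he.symm
          · exact hd_ne i h (by omega) he.symm
        · intro he
          rcases Nat.eq_zero_or_pos j with h | h
          · rw [h] at he; exact hd_ne0 he
          · exact hd_ne j h (by omega) he
        · omega
      · intro i hi
        rcases Nat.lt_or_ge i i0 with h | h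
        · have : (i + 1) % n = i + 1 := Nat.mod_eq_of_lt (by omega)
          rw [this, hc_lt i (by omega), hc_lt (i+1) (by omega)]
          exact hadj i (by omega)
        · rcases Nat.eq_or_lt_of_le h with h | h
          · have hmod : (i + 1) % n = i + 1 := Nat.mod_eq_of_lt (by omega)
            rw [hmod, ← h, hc_lt i0 le_rfl, hc_last]
            exact hi0adj.symm
          · have hi' : i = i0 + 1 := by omega
            have : (i + 1) % n = 0 := by rw [hi']; simp [hndef]
            rw [this, hi', hc_last, hc_lt 0 (by omega)]
            exact h0
      · intro i hi j hj hne hne1 hne2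
        have hmod : ∀ k, k < n → (k + 1) % n = if k + 1 = n then 0 else k + 1 := by
          intro k hk
          split_ifs with h
          · rw [h]; exact Nat.mod_self n
          · exact Nat.mod_eq_of_lt (by omega)
        rw [hmod i hi] at hne1
        rw [hmod j hj] at hne2
        -- unified nonadjacency
        rcases Nat.lt_or_ge i (i0 + 1) with hi' | hi' <;>
          rcases Nat.lt_or_ge j (i0 + 1) with hj' | hj'
        · -- both in path part
          rw [hc_lt i (by omega), hc_lt j (by omega)]
          rcases Nat.lt_or_ge i j with h | h
          · have : i + 1 < j := by split_ifs at hne1 <;> omega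
            exact hnadj i j (by omega) this
          · have hji : j < i := by omega
            have : j + 1 < i := by split_ifs at hne2 <;> omega
            intro hadj'
            exact hnadj j i (by omega) this hadj'.symm
        · -- j = i0 + 1 (the vertex d)
          have hj'' : j = i0 + 1 := by omega
          rw [hc_lt i (by omega), hj'', hc_last]
          have hi1 : 1 ≤ i := by
            split_ifs at hne2 <;> omega
          have hii0 : i < i0 := by
            split_ifs at hne1 <;> omega
          intro hadj'
          exact hi0min i hi1 hii0 hadj'.symm
        · have hi'' : i = i0 + 1 := by omega
          rw [hc_lt j (by omega), hi'', hc_last]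
          have hj1 : 1 ≤ j := by
            split_ifs at hne1 <;> omega
          have hji0 : j < i0 := by
            split_ifs at hne2 <;> omega
          exact hi0min j hj1 hji0
        · omega
    · -- extension: new path q = p 0, ..., p i0, d
      set m' := i0 + 1 with hm'def
      set q : ℕ → V := fun j => if j ≤ i0 then p j else d with hqdef
      have hq_lt : ∀ j, j ≤ i0 → q j = p j := fun j h => if_pos h
      have hq_last : q m' = d := if_neg (by omega)
      have hm'2 : 2 ≤ m' := by omega
      have hqinj : ∀ j k, j ≤ m' → k ≤ m' → j ≠ k → q j ≠ q k := by
        intro i j hi hj hne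
        simp only [hqdef]
        split_ifs with h1 h2 h2
        · exact hinj i j (by omega) (by omega) hne
        · intro he
          rcases Nat.eq_zero_or_pos i with h | h
          · rw [h] at he; exact hd_ne0 he.symm
          · exact hd_ne i h (by omega) he.symm
        · intro he
          rcases Nat.eq_zero_or_pos j with h | h
          · rw [h] at he; exact hd_ne0 he
          · exact hd_ne j h (by omega) he
        · omega
      have hqadj : ∀ j, j < m' → G.Adj (q j) (q (j + 1)) := by
        intro j hj
        rcases Nat.lt_or_ge j i0 with h | h
        · rw [hq_lt j (by omega), hq_lt (j+1) (by omega)]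
          exact hadj j (by omega)
        · have : j = i0 := by omega
          rw [this, hq_lt i0 le_rfl]
          have : q (i0 + 1) = d := if_neg (by omega)
          rw [this]
          exact hi0adj.symm
      have hqnadj : ∀ j k, k ≤ m' → j + 1 < k → ¬ G.Adj (q j) (q k) := by
        intro j k hk hjk
        rcases Nat.lt_or_ge k m' with h | h
        · rw [hq_lt j (by omega), hq_lt k (by omega)]
          exact hnadj j k (by omega) hjk
        · have hk' : k = m' := by omega
          rw [hk', hq_last, hq_lt j (by omega)]
          rcases Nat.eq_zero_or_pos j with h' | h'
          · rw [h']
            intro hadj'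
            exact h0 hadj'.symm
          · intro hadj'
            exact hi0min j h' (by omega) hadj'.symm
      have hfd_ne : f d ≠ f (p 0) := fun he => hd_ne0 (hf.1 he)
      rcases Nat.lt_or_ge (f (p 0)) (f d) with hcmp | hcmp
      · -- recurse on q directly
        apply ih m' q _ hm'2 hqinj hqadj hqnadj _ _
        · rw [hq_last]; omega
        · rw [hq_last, hq_lt 0 (by omega)]; exact hcmp
        · intro j h1 h2
          rw [hq_last, hq_lt j (by omega)]
          exact hfd_lt j h1 (by omega)
      · -- f d < f (p 0) : recurse on reversed path
        have hcmp' : f d < f (p 0) := by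
          rcases Nat.lt_or_ge (f d) (f (p 0)) with h | h
          · exact h
          · exact absurd (le_antisymm hcmp h) hfd_ne
        set r : ℕ → V := fun j => q (m' - j) with hrdef
        have hr0 : r 0 = d := by simp only [hrdef, Nat.sub_zero, hq_last]
        have hrm : r m' = p 0 := by
          simp only [hrdef, Nat.sub_self]
          exact hq_lt 0 (by omega)
        apply ih m' r _ (by omega) _ _ _ _ _
        · rw [hrm]; omega
        · intro i j hi hj hne
          exact hqinj (m' - i) (m' - j) (by omega) (by omega) (by omega)
        · intro j hj
          have h1 : m' - j = (m' - (j + 1)) + 1 := by omega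
          rw [hrdef]
          simp only
          rw [h1]
          exact (hqadj (m' - (j+1)) (by omega)).symm
        · intro j k hk hjk
          intro hadj'
          exact hqnadj (m' - k) (m' - j) (by omega) (by omega) hadj'.symm
        · rw [hr0, hrm]; exact hcmp'
        · intro j h1 h2
          rw [hrm, hrdef]
          simp only
          rw [hq_lt (m' - j) (by omega)]
          exact hp0_lt (m' - j) (by omega) (by omega)

lemma no_immorality_ordered {V : Type} [Fintype V] (G : SimpleGraph V)
    (hch : Chordal G) (f : V → ℕ) (hf : IsMCSNumbering G f)
    {a b c : V} (hnac : ¬ G.Adj a c) (hab : G.Adj a b) (hcb : G.Adj c b)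
    (hac : f a < f c) (hcbf : f c < f b) : False := by
  set p : ℕ → V := fun j => if j = 0 then a else if j = 1 then b else c with hpdef
  have hp0 : p 0 = a := rfl
  have hp1 : p 1 = b := rfl
  have hp2 : p 2 = c := rfl
  have hfab : f a < f b := lt_trans hac hcbf
  apply no_bad_path G hch f hf (f c + 1) 2 p
  · rw [hp2]; omega
  · omega
  · have nab : a ≠ b := fun he => by rw [he] at hfab; exact lt_irrefl _ hfab
    have nbc : b ≠ c := fun he => by rw [he] at hcbf; exact lt_irrefl _ hcbf
    have nac : a ≠ c := fun he => by rw [he] at hac; exact lt_irrefl _ hac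
    intro j k hj hk hne
    interval_cases j <;> interval_cases k <;> simp only [hp0, hp1, hp2] <;>
      first
        | exact absurd rfl hne
        | exact nab
        | exact nbc
        | exact nac
        | exact Ne.symm nab
        | exact Ne.symm nbc
        | exact Ne.symm nac
  · intro j hj
    interval_cases j
    · rw [hp0, hp1]; exact hab
    · rw [hp1, hp2]; exact hcb.symm
  · intro j k hk hjk
    have : j = 0 ∧ k = 2 := by omega
    rw [this.1, this.2, hp0, hp2]
    exact hnac
  · rw [hp0, hp2]; exact hac
  · intro j h1 h2
    have : j = 1 := by omega
    rw [this, hp1, hp2]; exact hcbf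

/-- In a connected chordal graph, orienting each edge from the lower-numbered to the
higher-numbered endpoint of a maximum cardinality search numbering yields an acyclic
orientation with no immorality `a→b←c` (`a`,`c` nonadjacent). -/
theorem stmt2 {V : Type} [Fintype V] (G : SimpleGraph V) (hconn : G.Connected)
    (hch : Chordal G) (f : V → ℕ) (hf : IsMCSNumbering G f) :
    (∀ (n : ℕ) (v : ℕ → V), 1 ≤ n → v n = v 0 →
      ¬ ∀ i, i < n → G.Adj (v i) (v (i + 1)) ∧ f (v i) < f (v (i + 1))) ∧
    ¬ ∃ a b c : V, a ≠ c ∧ ¬ G.Adj a c ∧ G.Adj a b ∧ G.Adj c b ∧ f a < f b ∧ f c < f b := by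
  constructor
  · intro n v hn hcyc h
    have key : ∀ k, k ≤ n → 1 ≤ k → f (v 0) < f (v k) := by
      intro k
      induction k with
      | zero => omega
      | succ k ihk =>
        intro hk _
        rcases Nat.eq_zero_or_pos k with h' | h'
        · rw [h']
          exact (h 0 (by omega)).2
        · exact lt_trans (ihk (by omega) h') (h k (by omega)).2
    have := key n le_rfl hn
    rw [hcyc] at this
    exact lt_irrefl _ this
  · rintro ⟨a, b, c, hne, hnadj, hab, hcb, hfab, hfcb⟩
    have hfne : f a ≠ f c := fun he => hne (hf.1 he)
    rcases Nat.lt_or_ge (f a) (f c) with h | h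
    · exact no_immorality_ordered G hch f hf hnadj hab hcb h hfcb
    · have h' : f c < f a := by omega
      exact no_immorality_ordered G hch f hf (fun hadj => hnadj hadj.symm) hcb hab h' hfab
end

section
/- Let G be a chordal undirected graph and let A ⊆ V be a complete subset (all vertices of A pairwise adjacent). Then maximum cardinality search can be started at any vertex of A and arranged to number all vertices of A before any vertex of V∖A; consequently there exists a perfect orientation D of G (acyclic with no immoralities) in which every edge a−v with a ∈ A and v ∈ V∖A is oriented as a→v. -/
open Classical

section Construction
variable {V : Type} [Fintype V] (G : SimpleGraph V) (A : Set V) (a0 : V)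

/-- The set of vertices of `A`, as a Finset. -/
noncomputable def Afin : Finset V := Finset.univ.filter (fun x => x ∈ A)

/-- Pick the next vertex of the search, given the set `S` of already-numbered vertices:
first `a0`, then vertices of `A`, then a vertex maximizing the number of numbered
neighbors. -/
noncomputable def mcsPick (S : Finset V) : V :=
  if a0 ∉ S then a0
  else if h : (Afin A \ S).Nonempty then h.choose
  else if h2 : Sᶜ.Nonempty then
    (Finset.exists_max_image Sᶜ (fun v => (S.filter (fun u => G.Adj u v)).card) h2).choose
  else a0

/-- The set of numbered vertices after `n` steps. -/
noncomputable def mcsSet : ℕ → Finset V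
  | 0 => ∅
  | n + 1 => insert (mcsPick G A a0 (mcsSet n)) (mcsSet n)

lemma mcsSet_mono {m n : ℕ} (h : m ≤ n) : mcsSet G A a0 m ⊆ mcsSet G A a0 n := by
  induction n with
  | zero =>
    have : m = 0 := Nat.le_zero.mp h
    subst this; rfl
  | succ k ihk =>
    rcases Nat.lt_or_ge m (k+1) with h'|h'
    · exact (ihk (by omega)).trans (by simp [mcsSet, Finset.subset_insert])
    · have : m = k + 1 := by omega
      subst this; rfl

lemma mcsPick_notMem {S : Finset V} (h : Sᶜ.Nonempty) : mcsPick G A a0 S ∉ S := by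
  unfold mcsPick
  by_cases h1 : a0 ∉ S
  · rw [if_pos h1]; exact h1
  · rw [if_neg h1]
    by_cases h2 : (Afin A \ S).Nonempty
    · rw [dif_pos h2]; exact (Finset.mem_sdiff.1 h2.choose_spec).2
    · rw [dif_neg h2, dif_pos h]
      have := (Finset.exists_max_image Sᶜ
        (fun v => (S.filter (fun u => G.Adj u v)).card) h).choose_spec
      exact Finset.mem_compl.1 this.1

lemma mcsSet_card (n : ℕ) : mcsSet G A a0 n = Finset.univ ∨ n ≤ (mcsSet G A a0 n).card := by
  induction n with
  | zero => right; simp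
  | succ k ihk =>
    rcases ihk with h|h
    · left
      apply Finset.eq_univ_of_forall
      intro x
      exact mcsSet_mono G A a0 (Nat.le_succ k) (h ▸ Finset.mem_univ x)
    · by_cases hu : mcsSet G A a0 k = Finset.univ
      · left
        apply Finset.eq_univ_of_forall
        intro x
        exact mcsSet_mono G A a0 (Nat.le_succ k) (hu ▸ Finset.mem_univ x)
      · right
        have hne : (mcsSet G A a0 k)ᶜ.Nonempty := by
          rcases Finset.eq_empty_or_nonempty ((mcsSet G A a0 k)ᶜ) with he|he
          · exact absurd ((Finset.compl_eq_empty_iff _).1 he) hu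
          · exact he
        have hnm := mcsPick_notMem G A a0 hne
        show k + 1 ≤ (insert (mcsPick G A a0 (mcsSet G A a0 k)) (mcsSet G A a0 k)).card
        rw [Finset.card_insert_of_notMem hnm]
        omega

lemma mcsSet_univ : mcsSet G A a0 (Fintype.card V) = Finset.univ := by
  rcases mcsSet_card G A a0 (Fintype.card V) with h|h
  · exact h
  · exact Finset.eq_univ_of_card _ (le_antisymm (Finset.card_le_univ _) (by simpa using h))

/-- The numbering. -/
noncomputable def mcsF (v : V) : ℕ := sInf {n | v ∈ mcsSet G A a0 (n + 1)}

lemma mcsF_nonempty (v : V) : {n | v ∈ mcsSet G A a0 (n + 1)}.Nonempty := by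
  refine ⟨Fintype.card V, ?_⟩
  show v ∈ mcsSet G A a0 (Fintype.card V + 1)
  exact mcsSet_mono G A a0 (Nat.le_succ _) (by rw [mcsSet_univ]; exact Finset.mem_univ v)

lemma mem_mcsSet_succ_self (v : V) : v ∈ mcsSet G A a0 (mcsF G A a0 v + 1) :=
  Nat.sInf_mem (mcsF_nonempty G A a0 v)

lemma notMem_mcsSet_self (v : V) : v ∉ mcsSet G A a0 (mcsF G A a0 v) := by
  intro hv
  rcases Nat.eq_zero_or_pos (mcsF G A a0 v) with h|h
  · rw [h] at hv; simp [mcsSet] at hv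
  · have : mcsF G A a0 v - 1 ∈ {n | v ∈ mcsSet G A a0 (n + 1)} := by
      show v ∈ mcsSet G A a0 (mcsF G A a0 v - 1 + 1)
      have heq : mcsF G A a0 v - 1 + 1 = mcsF G A a0 v := by omega
      rwa [heq]
    have h2 := Nat.sInf_le this
    have heq : mcsF G A a0 v = sInf {n | v ∈ mcsSet G A a0 (n + 1)} := rfl
    omega

lemma mcsF_eq_pick (v : V) : v = mcsPick G A a0 (mcsSet G A a0 (mcsF G A a0 v)) := by
  have h1 := mem_mcsSet_succ_self G A a0 v
  have h2 := notMem_mcsSet_self G A a0 v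
  rcases Finset.mem_insert.1 h1 with h|h
  · exact h
  · exact absurd h h2

lemma mem_mcsSet_iff (v : V) (n : ℕ) : v ∈ mcsSet G A a0 n ↔ mcsF G A a0 v < n := by
  constructor
  · intro hv
    rcases Nat.eq_zero_or_pos n with h|h
    · rw [h] at hv; simp [mcsSet] at hv
    · have : n - 1 ∈ {k | v ∈ mcsSet G A a0 (k + 1)} := by
        show v ∈ mcsSet G A a0 (n - 1 + 1)
        have heq : n - 1 + 1 = n := by omega
        rwa [heq]
      have h2 := Nat.sInf_le this
      have heq : mcsF G A a0 v = sInf {k | v ∈ mcsSet G A a0 (k + 1)} := rfl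
      omega
  · intro hv
    exact mcsSet_mono G A a0 (by omega : mcsF G A a0 v + 1 ≤ n)
      (mem_mcsSet_succ_self G A a0 v)

lemma mcsF_injective : Function.Injective (mcsF G A a0) := by
  intro u v h
  have hu := mcsF_eq_pick G A a0 u
  have hv := mcsF_eq_pick G A a0 v
  rw [hu, hv, h]


lemma mcsPick_mem_A {S : Finset V} (ha0 : a0 ∈ A) (h : (Afin A \ S).Nonempty) :
    mcsPick G A a0 S ∈ Afin A := by
  unfold mcsPick
  by_cases h1 : a0 ∉ S
  · rw [if_pos h1]; simp [Afin, ha0]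
  · rw [if_neg h1, dif_pos h]
    exact (Finset.mem_sdiff.1 h.choose_spec).1

lemma mcsSet_phase (ha0 : a0 ∈ A) (n : ℕ) :
    mcsSet G A a0 n ⊆ Afin A ∨ Afin A ⊆ mcsSet G A a0 n := by
  induction n with
  | zero => left; simp [mcsSet]
  | succ k ihk =>
    by_cases hAS : Afin A ⊆ mcsSet G A a0 k
    · right; exact hAS.trans (Finset.subset_insert _ _)
    · have hS : mcsSet G A a0 k ⊆ Afin A := by
        rcases ihk with h|h
        · exact h
        · exact absurd h hAS
      have hne : (Afin A \ mcsSet G A a0 k).Nonempty := by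
        rcases Finset.eq_empty_or_nonempty (Afin A \ mcsSet G A a0 k) with he|he
        · exact absurd (Finset.sdiff_eq_empty_iff_subset.1 he) hAS
        · exact he
      left
      exact Finset.insert_subset (mcsPick_mem_A G A a0 ha0 hne) hS

lemma a0_mem_mcsSet {n : ℕ} (hn : 1 ≤ n) : a0 ∈ mcsSet G A a0 n := by
  have h1 : a0 ∈ mcsSet G A a0 1 := by
    show a0 ∈ insert (mcsPick G A a0 (mcsSet G A a0 0)) (mcsSet G A a0 0)
    have : mcsPick G A a0 (∅ : Finset V) = a0 := by
      unfold mcsPick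
      rw [if_pos (Finset.notMem_empty a0)]
    show a0 ∈ insert (mcsPick G A a0 (∅ : Finset V)) (∅ : Finset V)
    rw [this]; exact Finset.mem_insert_self _ _
  exact mcsSet_mono G A a0 hn h1

/-- The key maximality property of `mcsPick` on the sets arising during the search. -/
lemma mcsPick_max (ha0 : a0 ∈ A) (hA : ∀ a ∈ A, ∀ b ∈ A, a ≠ b → G.Adj a b)
    (n : ℕ) (w : V) (hw : w ∉ mcsSet G A a0 n) :
    ((mcsSet G A a0 n).filter (fun u => G.Adj u w)).card ≤
      ((mcsSet G A a0 n).filter (fun u => G.Adj u (mcsPick G A a0 (mcsSet G A a0 n)))).card := by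
  set S := mcsSet G A a0 n with hSdef
  rcases Nat.eq_zero_or_pos n with hn|hn
  · have : S = ∅ := by rw [hSdef, hn]; rfl
    simp [this]
  · have ha0S : a0 ∈ S := a0_mem_mcsSet G A a0 hn
    unfold mcsPick
    rw [if_neg (by simpa using ha0S)]
    by_cases h2 : (Afin A \ S).Nonempty
    · rw [dif_pos h2]
      set a := h2.choose with hadef
      have haspec := h2.choose_spec
      rw [← hadef] at haspec
      have haA : a ∈ A := by
        have := (Finset.mem_sdiff.1 haspec).1
        simpa [Afin] using this
      have haS : a ∉ S := (Finset.mem_sdiff.1 haspec).2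
      have hSA : S ⊆ Afin A := by
        rcases mcsSet_phase G A a0 ha0 n with h|h
        · exact h
        · exfalso
          exact haS (h (by simpa [Afin] using haA))
      have hfull : S.filter (fun u => G.Adj u a) = S := by
        apply Finset.filter_true_of_mem
        intro u huS
        have huA : u ∈ A := by have := hSA huS; simpa [Afin] using this
        exact hA u huA a haA (fun he => haS (he ▸ huS))
      rw [hfull]
      exact Finset.card_le_card (Finset.filter_subset _ _)
    · rw [dif_neg h2]
      have h3 : Sᶜ.Nonempty := ⟨w, Finset.mem_compl.2 hw⟩
      rw [dif_pos h3]
      have hspec := (Finset.exists_max_image Sᶜ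
        (fun v => (S.filter (fun u => G.Adj u v)).card) h3).choose_spec
      exact hspec.2 w (Finset.mem_compl.2 hw)

/-- The constructed numbering is an MCS numbering. -/
lemma mcsF_isMCS (ha0 : a0 ∈ A) (hA : ∀ a ∈ A, ∀ b ∈ A, a ≠ b → G.Adj a b) :
    IsMCSNumbering G (mcsF G A a0) := by
  refine ⟨mcsF_injective G A a0, ?_⟩
  intro v w hvw
  set f := mcsF G A a0 with hfdef
  have hset : ∀ x : V, {u : V | G.Adj u x ∧ f u < f v} =
      ↑((mcsSet G A a0 (f v)).filter (fun u => G.Adj u x)) := by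
    intro x
    ext u
    simp only [Set.mem_setOf_eq, Finset.coe_filter, mem_mcsSet_iff]
    tauto
  rw [hset v, hset w, Set.ncard_coe_finset, Set.ncard_coe_finset]
  rcases eq_or_lt_of_le hvw with he|hlt
  · have : v = w := mcsF_injective G A a0 he
    subst this; exact le_rfl
  · have hw : w ∉ mcsSet G A a0 (f v) := by
      rw [mem_mcsSet_iff, ← hfdef]; omega
    have hv : v = mcsPick G A a0 (mcsSet G A a0 (f v)) := mcsF_eq_pick G A a0 v
    calc ((mcsSet G A a0 (f v)).filter (fun u => G.Adj u w)).card
        ≤ ((mcsSet G A a0 (f v)).filter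
            (fun u => G.Adj u (mcsPick G A a0 (mcsSet G A a0 (f v))))).card :=
          mcsPick_max G A a0 ha0 hA (f v) w hw
      _ = _ := by rw [← hv]

/-- Vertices of `A` are numbered before vertices outside `A`. -/
lemma mcsF_A_first (ha0 : a0 ∈ A) (a : V) (ha : a ∈ A) (v : V) (hv : v ∉ A) :
    mcsF G A a0 a < mcsF G A a0 v := by
  rw [← mem_mcsSet_iff]
  by_contra hmem
  have hne : (Afin A \ mcsSet G A a0 (mcsF G A a0 v)).Nonempty :=
    ⟨a, Finset.mem_sdiff.2 ⟨by simpa [Afin] using ha, hmem⟩⟩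
  have : v ∈ Afin A := by
    rw [mcsF_eq_pick G A a0 v]
    exact mcsPick_mem_A G A a0 ha0 hne
  exact hv (by simpa [Afin] using this)

lemma mcsF_a0_zero : mcsF G A a0 a0 = 0 := by
  have := (mem_mcsSet_iff G A a0 a0 1).1 (a0_mem_mcsSet G A a0 le_rfl)
  omega

end Construction

section ChordalMCS
variable {V : Type} [Fintype V] {G : SimpleGraph V} {f : V → ℕ}

/-- An MCS numbering satisfies the exchange property P. -/
lemma mcs_propP (h : IsMCSNumbering G f) :
    ∀ v w : V, f v ≤ f w → ∀ x, G.Adj x w → f x < f v → ¬ G.Adj x v →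
      ∃ y, G.Adj y v ∧ f y < f v ∧ ¬ G.Adj y w := by
  intro v w hvw x hxw hxv hnadj
  by_contra hno
  push_neg at hno
  have hsub : {u : V | G.Adj u v ∧ f u < f v} ⊆ {u : V | G.Adj u w ∧ f u < f v} := by
    intro u hu
    exact ⟨hno u hu.1 hu.2, hu.2⟩
  have hss : {u : V | G.Adj u v ∧ f u < f v} ⊂ {u : V | G.Adj u w ∧ f u < f v} :=
    ⟨hsub, fun hsup => hnadj (hsup ⟨hxw, hxv⟩).1⟩
  have hlt := Set.ncard_lt_ncard hss (Set.toFinite _)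
  have h2 := h.2 v w hvw
  omega

/-- Key lemma: in a chordal graph with a numbering satisfying property P, there is no
"bad path": a chordless path whose endpoints have the two smallest numbers. -/
lemma no_bad_path_s3 (hch : Chordal G) (hinj : Function.Injective f)
    (hP : ∀ v w : V, f v ≤ f w → ∀ x, G.Adj x w → f x < f v → ¬ G.Adj x v →
      ∃ y, G.Adj y v ∧ f y < f v ∧ ¬ G.Adj y w) :
    ∀ M (m : ℕ) (p : ℕ → V), f (p m) = M → 2 ≤ m →
      (∀ i j, i < j → j ≤ m → (G.Adj (p i) (p j) ↔ j = i + 1)) →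
      (∀ i j, i ≤ m → j ≤ m → i ≠ j → p i ≠ p j) →
      f (p 0) < f (p m) →
      (∀ i, 0 < i → i < m → f (p m) < f (p i)) → False := by
  intro M
  induction M using Nat.strong_induction_on with
  | _ M ih =>
  intro m p hfM hm hadj hdist h0 hint
  have hklt : ∀ k, 1 ≤ k → k ≤ m → f (p m) ≤ f (p k) := by
    intro k h1 hk
    rcases eq_or_lt_of_le hk with he|hl
    · rw [he]
    · exact (hint k h1 hl).le
  obtain ⟨q, hq_adj, hq_lt, hq_nadj⟩ :=
    hP (p m) (p 1) (hklt 1 le_rfl (by omega)) (p 0)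
      ((hadj 0 1 (by omega) (by omega)).2 rfl)
      h0
      (fun h => by have := (hadj 0 m (by omega) le_rfl).1 h; omega)
  have hq_ne : ∀ k, 1 ≤ k → k ≤ m → q ≠ p k := by
    intro k h1 hk he
    have := hklt k h1 hk
    rw [he] at hq_lt
    omega
  have hex : ∃ i, i ≤ m ∧ G.Adj q (p i) := ⟨m, le_rfl, hq_adj⟩
  set i0 := Nat.find hex with hi0def
  obtain ⟨hi0m, hi0adj⟩ := Nat.find_spec hex
  rw [← hi0def] at hi0m hi0adj
  have hi0min : ∀ j, j < i0 → j ≤ m → ¬ G.Adj q (p j) := by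
    intro j hj hjm hadj'
    exact Nat.find_min hex hj ⟨hjm, hadj'⟩
  have hi0ne1 : i0 ≠ 1 := by
    intro h
    rw [h] at hi0adj
    exact hq_nadj hi0adj
  rcases Nat.eq_zero_or_pos i0 with hi0z|hi0pos
  · -- q is adjacent to p 0 : build a chordless cycle
    rw [hi0z] at hi0adj
    have hex2 : ∃ j, 2 ≤ j ∧ j ≤ m ∧ G.Adj q (p j) := ⟨m, hm, le_rfl, hq_adj⟩
    set j0 := Nat.find hex2 with hj0def
    obtain ⟨hj02, hj0m, hj0adj⟩ := Nat.find_spec hex2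
    have hj0min : ∀ j, 2 ≤ j → j < j0 → ¬ G.Adj q (p j) := by
      intro j h2 hj hadj'
      exact Nat.find_min hex2 hj ⟨h2, by omega, hadj'⟩
    set n := j0 + 2 with hndef
    set c : ℕ → V := fun i => if i ≤ j0 then p i else q with hcdef
    apply hch n c
    have hcq : ∀ j, j ≤ j0 → q ≠ p j := by
      intro j hj
      rcases Nat.eq_zero_or_pos j with h|h
      · rw [h]; exact hi0adj.ne
      · exact hq_ne j h (by omega)
    refine ⟨by omega, ?_, ?_, ?_⟩
    · -- distinct
      intro i hi j hj hij
      by_cases h1 : i ≤ j0 <;> by_cases h2 : j ≤ j0 <;>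
        simp only [hcdef, if_pos, if_neg, h1, h2, if_true, if_false]
      · exact hdist i j (by omega) (by omega) hij
      · exact fun he => hcq i h1 he.symm
      · exact hcq j h2
      · omega
    · -- consecutive adjacency
      intro i hi
      rcases lt_trichotomy i j0 with h|h|h
      · have e1 : c i = p i := if_pos (le_of_lt h)
        have e2 : (i+1) % n = i+1 := Nat.mod_eq_of_lt (by omega)
        have e3 : c (i+1) = p (i+1) := if_pos (by omega)
        rw [e1, e2, e3]
        exact (hadj i (i+1) (by omega) (by omega)).2 rfl
      · have e1 : c i = p i := if_pos (le_of_eq h)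
        have e2 : (i+1) % n = i+1 := Nat.mod_eq_of_lt (by omega)
        have e3 : c (i+1) = q := if_neg (by omega)
        rw [e1, e2, e3, h]
        exact hj0adj.symm
      · have hieq : i = j0 + 1 := by omega
        have e1 : c i = q := if_neg (by omega)
        have e2 : (i+1) % n = 0 := by rw [hieq]; show (j0+2) % (j0+2) = 0; exact Nat.mod_self _
        have e3 : c 0 = p 0 := if_pos (by omega)
        rw [e1, e2, e3]
        exact hi0adj
    · -- nonadjacency
      intro i hi j hj hij h1 h2
      by_cases hi' : i ≤ j0 <;> by_cases hj' : j ≤ j0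
      · have e1 : c i = p i := if_pos hi'
        have e2 : c j = p j := if_pos hj'
        rw [e1, e2]
        have m1 : (i+1) % n = i+1 := Nat.mod_eq_of_lt (by omega)
        have m2 : (j+1) % n = j+1 := Nat.mod_eq_of_lt (by omega)
        rw [m1] at h1; rw [m2] at h2
        rcases lt_trichotomy i j with h|h|h
        · intro hadj'
          have := (hadj i j h (by omega)).1 hadj'
          omega
        · omega
        · intro hadj'
          have := (hadj j i h (by omega)).1 hadj'.symm
          omega
      · -- i ≤ j0, j = j0+1
        have hjq : j = j0 + 1 := by omega
        have e1 : c i = p i := if_pos hi'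
        have e2 : c j = q := by rw [hjq]; exact if_neg (by omega)
        rw [e1, e2]
        have m2 : (j+1) % n = 0 := by rw [hjq]; show (j0+2) % (j0+2) = 0; exact Nat.mod_self _
        rw [m2] at h2
        have m1 : (i+1) % n = i + 1 := Nat.mod_eq_of_lt (by omega)
        rw [m1, hjq] at h1
        intro hadj'
        have hadj'' : G.Adj q (p i) := hadj'.symm
        rcases Nat.lt_or_ge i 2 with h|h
        · have : i = 1 := by omega
          rw [this] at hadj''
          exact hq_nadj hadj''
        · exact hj0min i h (by omega) hadj''
      · -- j ≤ j0, i = j0+1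
        have hiq : i = j0 + 1 := by omega
        have e1 : c i = q := by rw [hiq]; exact if_neg (by omega)
        have e2 : c j = p j := if_pos hj'
        rw [e1, e2]
        have m1 : (i+1) % n = 0 := by rw [hiq]; show (j0+2) % (j0+2) = 0; exact Nat.mod_self _
        rw [m1] at h1
        have m2 : (j+1) % n = j + 1 := Nat.mod_eq_of_lt (by omega)
        rw [m2, hiq] at h2
        intro hadj'
        rcases Nat.lt_or_ge j 2 with h|h
        · have : j = 1 := by omega
          rw [this] at hadj'
          exact hq_nadj hadj'
        · exact hj0min j h (by omega) hadj'
      · omega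
  · -- i0 ≥ 2 : extend or flip the path
    have hi02 : 2 ≤ i0 := by omega
    have hp01 : G.Adj (p 0) (p 1) := (hadj 0 1 (by omega) (by omega)).2 rfl
    have hq_ne0 : q ≠ p 0 := by
      intro he
      rw [he] at hq_nadj
      exact hq_nadj hp01
    have hq_ne' : ∀ k, k ≤ i0 → q ≠ p k := by
      intro k hk
      rcases Nat.eq_zero_or_pos k with h|h
      · rw [h]; exact hq_ne0
      · exact hq_ne k h (by omega)
    by_cases hq0 : f (p 0) < f q
    · -- extend the path by q
      set p' : ℕ → V := fun j => if j ≤ i0 then p j else q with hp'def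
      refine ih (f q) (by omega) (i0+1) p' ?_ (by omega) ?_ ?_ ?_ ?_
      · show f (p' (i0+1)) = f q
        simp only [hp'def]
        rw [if_neg (by omega : ¬ i0 + 1 ≤ i0)]
      · intro i j hij hj
        by_cases hj' : j ≤ i0
        · have e1 : p' i = p i := if_pos (by omega)
          have e2 : p' j = p j := if_pos hj'
          rw [e1, e2]; exact hadj i j hij (by omega)
        · have hjeq : j = i0 + 1 := by omega
          have e1 : p' i = p i := if_pos (by omega)
          have e2 : p' j = q := by rw [hjeq]; exact if_neg (by omega)
          rw [e1, e2, hjeq]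
          constructor
          · intro hadj'
            by_contra hne
            exact hi0min i (by omega) (by omega) hadj'.symm
          · intro he
            have : i = i0 := by omega
            rw [this]
            exact hi0adj.symm
      · intro i j hi hj hij
        by_cases hi' : i ≤ i0 <;> by_cases hj' : j ≤ i0
        · have e1 : p' i = p i := if_pos hi'
          have e2 : p' j = p j := if_pos hj'
          rw [e1, e2]
          exact hdist i j (by omega) (by omega) hij
        · have e1 : p' i = p i := if_pos hi'
          have e2 : p' j = q := by
            have : j = i0 + 1 := by omega
            rw [this]; exact if_neg (by omega)
          rw [e1, e2]
          exact fun he => hq_ne' i hi' he.symm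
        · have e1 : p' i = q := by
            have : i = i0 + 1 := by omega
            rw [this]; exact if_neg (by omega)
          have e2 : p' j = p j := if_pos hj'
          rw [e1, e2]
          exact hq_ne' j hj'
        · omega
      · show f (p' 0) < f (p' (i0+1))
        simp only [hp'def]
        rw [if_pos (by omega : (0:ℕ) ≤ i0), if_neg (by omega : ¬ i0 + 1 ≤ i0)]
        exact hq0
      · intro i h0i hi
        have hi' : i ≤ i0 := by omega
        show f (p' (i0+1)) < f (p' i)
        simp only [hp'def]
        rw [if_pos hi', if_neg (by omega : ¬ i0 + 1 ≤ i0)]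
        exact lt_of_lt_of_le hq_lt (hklt i h0i (by omega))
    · -- flip the path
      have hq0' : f q < f (p 0) := by
        rcases eq_or_lt_of_le (not_lt.1 hq0) with he|hl
        · exact absurd (hinj he) hq_ne0
        · exact hl
      set p'' : ℕ → V := fun j => if j = 0 then q else p (i0 + 1 - j) with hp''def
      refine ih (f (p 0)) (by omega) (i0+1) p'' ?_ (by omega) ?_ ?_ ?_ ?_
      · show f (p'' (i0+1)) = f (p 0)
        simp only [hp''def]
        rw [if_neg (by omega : ¬ i0 + 1 = 0), Nat.sub_self]
      · intro i j hij hj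
        by_cases hi' : i = 0
        · have e1 : p'' i = q := by rw [hi']; show (if (0:ℕ) = 0 then q else _) = q; rw [if_pos rfl]
          have e2 : p'' j = p (i0 + 1 - j) := if_neg (by omega)
          rw [e1, e2, hi']
          constructor
          · intro hadj'
            by_contra hne
            exact hi0min (i0+1-j) (by omega) (by omega) hadj'
          · intro he
            have : i0 + 1 - j = i0 := by omega
            rw [this]
            exact hi0adj
        · have e1 : p'' i = p (i0+1-i) := if_neg hi'
          have e2 : p'' j = p (i0+1-j) := if_neg (by omega)
          rw [e1, e2, G.adj_comm]
          rw [hadj (i0+1-j) (i0+1-i) (by omega) (by omega)]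
          omega
      · intro i j hi hj hij
        by_cases hi' : i = 0 <;> by_cases hj' : j = 0
        · omega
        · have e1 : p'' i = q := by rw [hi']; show (if (0:ℕ) = 0 then q else _) = q; rw [if_pos rfl]
          have e2 : p'' j = p (i0+1-j) := if_neg hj'
          rw [e1, e2]
          exact hq_ne' (i0+1-j) (by omega)
        · have e1 : p'' i = p (i0+1-i) := if_neg hi'
          have e2 : p'' j = q := by rw [hj']; show (if (0:ℕ) = 0 then q else _) = q; rw [if_pos rfl]
          rw [e1, e2]
          exact fun he => hq_ne' (i0+1-i) (by omega) he.symm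
        · have e1 : p'' i = p (i0+1-i) := if_neg hi'
          have e2 : p'' j = p (i0+1-j) := if_neg hj'
          rw [e1, e2]
          exact hdist (i0+1-i) (i0+1-j) (by omega) (by omega) (by omega)
      · show f (p'' 0) < f (p'' (i0+1))
        simp only [hp''def]
        rw [if_pos trivial, if_neg (by omega : ¬ i0 + 1 = 0), Nat.sub_self]
        exact hq0'
      · intro i h0i hi
        show f (p'' (i0+1)) < f (p'' i)
        simp only [hp''def]
        rw [if_neg (by omega : ¬ i0 + 1 = 0), Nat.sub_self, if_neg (by omega : ¬ i = 0)]
        have h1 : f (p m) ≤ f (p (i0+1-i)) := hklt (i0+1-i) (by omega) (by omega)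
        omega

end ChordalMCS

set_option linter.unusedSectionVars false in
lemma no_immorality {V : Type} [Fintype V] {G : SimpleGraph V} {f : V → ℕ}
    (hch : Chordal G) (h : IsMCSNumbering G f) :
    ¬ ∃ a b c : V, a ≠ c ∧ ¬ G.Adj a c ∧ G.Adj a b ∧ G.Adj c b ∧ f a < f b ∧ f c < f b := by
  have hinj := h.1
  have hP := mcs_propP h
  rintro ⟨a, b, c, hac, hnadj, hab, hcb, hfa, hfc⟩
  have key : ∀ a c : V, a ≠ c → ¬ G.Adj a c → G.Adj a b → G.Adj c b → f a < f b → f c < f b →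
      f a < f c → False := by
    intro a c hac hnadj hab hcb hfa hfc hlt
    refine no_bad_path_s3 hch hinj hP (f c) 2
      (fun i => match i with | 0 => a | 1 => b | _ => c) rfl le_rfl ?_ ?_ hlt ?_
    · intro i j hij hj
      interval_cases j
      · omega
      · interval_cases i
        simpa using hab
      · interval_cases i
        · simpa using hnadj
        · simpa using hcb.symm
    · intro i j hi hj hij
      interval_cases i <;> interval_cases j <;> simp_all
      all_goals first
        | exact hab.ne
        | exact hab.ne'
        | exact hcb.ne
        | exact hcb.ne'
        | exact hac
        | exact fun he => hac he.symm
    · intro i h1 h2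
      interval_cases i
      simpa using hfc
  rcases lt_trichotomy (f a) (f c) with h|h|h
  · exact key a c hac hnadj hab hcb hfa hfc h
  · exact hac (hinj h)
  · exact key c a (fun he => hac he.symm) (fun h' => hnadj h'.symm) hcb hab hfc hfa h


/-- For a chordal graph `G` and a complete vertex set `A`, maximum cardinality search can
start at any vertex of `A` and number all of `A` before `V ∖ A`; the resulting orientation
(from lower to higher number) is perfect (acyclic, no immoralities) and orients every edge
between `A` and `V ∖ A` out of `A`. -/
theorem stmt3 {V : Type} [Fintype V] (G : SimpleGraph V) (hch : Chordal G)
    (A : Set V) (hA : ∀ a ∈ A, ∀ b ∈ A, a ≠ b → G.Adj a b) (a0 : V) (ha0 : a0 ∈ A) :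
    ∃ f : V → ℕ, IsMCSNumbering G f ∧ (∀ v, f a0 ≤ f v) ∧
      (∀ a ∈ A, ∀ v, v ∉ A → f a < f v) ∧
      (∀ (n : ℕ) (v : ℕ → V), 1 ≤ n → v n = v 0 →
        ¬ ∀ i, i < n → G.Adj (v i) (v (i + 1)) ∧ f (v i) < f (v (i + 1))) ∧
      (¬ ∃ a b c : V, a ≠ c ∧ ¬ G.Adj a c ∧ G.Adj a b ∧ G.Adj c b ∧ f a < f b ∧ f c < f b) ∧
      (∀ a ∈ A, ∀ v, v ∉ A → G.Adj a v → f a < f v) := by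
  refine ⟨mcsF G A a0, mcsF_isMCS G A a0 ha0 hA, ?_, ?_, ?_, ?_, ?_⟩
  · intro v
    rw [mcsF_a0_zero]
    omega
  · exact fun a ha v hv => mcsF_A_first G A a0 ha0 a ha v hv
  · intro n v hn hvn hall
    have hmono : ∀ i, i ≤ n → mcsF G A a0 (v 0) ≤ mcsF G A a0 (v i) := by
      intro i
      induction i with
      | zero => intro _; exact le_rfl
      | succ k ihk =>
        intro hk
        exact le_trans (ihk (by omega)) (hall k (by omega)).2.le
    have h1 := hmono (n-1) (by omega)
    have h2 := (hall (n-1) (by omega)).2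
    have heq : n - 1 + 1 = n := by omega
    rw [heq] at h2
    rw [hvn] at h2
    omega
  · exact no_immorality hch (mcsF_isMCS G A a0 ha0 hA)
  · exact fun a ha v hv _ => mcsF_A_first G A a0 ha0 a ha v hv
end

section
/- Let 𝒢 be the set of chain graphs with a common skeleton and common triplexes (an AMP Markov equivalence class), and define the essential graph 𝒢* as the mixed graph with the same skeleton in which a→b is an arrow iff a→b occurs in some member of 𝒢 and a←b occurs in no member of 𝒢, and a−b is a line otherwise. Then 𝒢* has the same triplexes as every member of 𝒢. -/
/-- The AMP Markov equivalence class of a chain graph `G0`: all chain graphs with the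
same skeleton and the same triplexes as `G0`. -/
def AMPClass {V : Type} (G0 : MixedGraph V) : Set (MixedGraph V) :=
  {G | G.IsChainGraph ∧ G.sameSkeleton G0 ∧ G.sameTriplexes G0}

/-- `E` is the AMP essential graph of the class of `G0`: same skeleton; `a→b` is an arrow
of `E` iff it occurs in some member and its reversal in none; all other edges are lines. -/
def IsEssentialGraph {V : Type} (G0 E : MixedGraph V) : Prop :=
  E.sameSkeleton G0 ∧
    (∀ a b, E.arrow a b ↔
      (∃ G ∈ AMPClass G0, G.arrow a b) ∧ ∀ G ∈ AMPClass G0, ¬ G.arrow b a) ∧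
    (∀ a b, E.line a b ↔ G0.adj a b ∧ ¬ E.arrow a b ∧ ¬ E.arrow b a)

/-- A line of the essential graph is strong if it occurs as a line in every member. -/
def StrongLine {V : Type} (G0 E : MixedGraph V) (a b : V) : Prop :=
  E.line a b ∧ ∀ G ∈ AMPClass G0, G.line a b

/-- A line of the essential graph is weak if both orientations occur among members. -/
def WeakLine {V : Type} (G0 E : MixedGraph V) (a b : V) : Prop :=
  E.line a b ∧ (∃ G ∈ AMPClass G0, G.arrow a b) ∧ (∃ G ∈ AMPClass G0, G.arrow b a)

/-- An arrow of the essential graph is strong if it occurs as an arrow in every member. -/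
def StrongArrow {V : Type} (G0 E : MixedGraph V) (a b : V) : Prop :=
  E.arrow a b ∧ ∀ G ∈ AMPClass G0, G.arrow a b

/-- Lemma 3.1 (triplex part): the AMP essential graph has the same triplexes as every
member of its Markov equivalence class. -/
theorem stmt5 {V : Type} (G0 E : MixedGraph V) (h0 : G0.IsChainGraph)
    (hE : IsEssentialGraph G0 E) :
    ∀ G ∈ AMPClass G0, E.sameTriplexes G := by
  obtain ⟨hskel, harr, hline⟩ := hE
  have hG0mem : G0 ∈ AMPClass G0 := ⟨h0, fun a b => Iff.rfl, fun a b c => Iff.rfl⟩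
  have memAdj : ∀ G ∈ AMPClass G0, ∀ a b, E.adj a b → G.adj a b := by
    intro G hG a b h
    exact (hG.2.1 a b).mpr ((hskel a b).mp h)
  have arrowForm : ∀ G ∈ AMPClass G0, ∀ a b, E.arrow a b → G.arrow a b ∨ G.line a b := by
    intro G hG a b h
    have hadj : G.adj a b := memAdj G hG a b (Or.inl h)
    have hnoba : ¬ G.arrow b a := ((harr a b).mp h).2 G hG
    rcases hadj with h' | h' | h'
    · exact Or.inl h'
    · exact absurd h' hnoba
    · exact Or.inr h'
  have key : ∀ a b c, E.triplex a b c ↔ G0.triplex a b c := by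
    intro a b c
    constructor
    · -- E triplex → G0 triplex
      rintro ⟨hac, hnadj, hcfg⟩
      have hnadj0 : ¬ G0.adj a c := fun h => hnadj ((hskel a c).mpr h)
      have hex : ∃ G ∈ AMPClass G0, G.triplex a b c := by
        have mkNadj : ∀ G ∈ AMPClass G0, ¬ G.adj a c := by
          intro G hG h
          exact hnadj0 ((hG.2.1 a c).mp h)
        rcases hcfg with ⟨hab, hcb⟩ | ⟨hab, hbc⟩ | ⟨hab, hcb⟩
        · -- arrow a b, arrow c b
          obtain ⟨⟨G1, hG1, h1⟩, -⟩ := (harr a b).mp hab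
          rcases arrowForm G1 hG1 c b hcb with h2 | h2
          · exact ⟨G1, hG1, hac, mkNadj G1 hG1, Or.inl ⟨h1, h2⟩⟩
          · exact ⟨G1, hG1, hac, mkNadj G1 hG1,
              Or.inr (Or.inl ⟨h1, G1.line_symm _ _ h2⟩)⟩
        · -- arrow a b, line b c
          obtain ⟨⟨G1, hG1, h1⟩, hnoba⟩ := (harr a b).mp hab
          obtain ⟨-, hnEbc, hnEcb⟩ := (hline b c).mp hbc
          have hadjbc : G1.adj b c := memAdj G1 hG1 b c (Or.inr (Or.inr hbc))
          rcases hadjbc with h2 | h2 | h2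
          · -- G1 has b → c, so some G2 has c → b
            have h3 : ∃ G2 ∈ AMPClass G0, G2.arrow c b := by
              by_contra hno
              push_neg at hno
              exact hnEbc ((harr b c).mpr ⟨⟨G1, hG1, h2⟩, hno⟩)
            obtain ⟨G2, hG2, h4⟩ := h3
            rcases arrowForm G2 hG2 a b hab with h5 | h5
            · exact ⟨G2, hG2, hac, mkNadj G2 hG2, Or.inl ⟨h5, h4⟩⟩
            · exact ⟨G2, hG2, hac, mkNadj G2 hG2, Or.inr (Or.inr ⟨h5, h4⟩)⟩
          · exact ⟨G1, hG1, hac, mkNadj G1 hG1, Or.inl ⟨h1, h2⟩⟩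
          · exact ⟨G1, hG1, hac, mkNadj G1 hG1, Or.inr (Or.inl ⟨h1, h2⟩)⟩
        · -- line a b, arrow c b
          obtain ⟨⟨G1, hG1, h1⟩, hnobc⟩ := (harr c b).mp hcb
          obtain ⟨-, hnEab, hnEba⟩ := (hline a b).mp hab
          have hadjab : G1.adj a b := memAdj G1 hG1 a b (Or.inr (Or.inr hab))
          rcases hadjab with h2 | h2 | h2
          · exact ⟨G1, hG1, hac, mkNadj G1 hG1, Or.inl ⟨h2, h1⟩⟩
          · -- G1 has b → a, so some G2 has a → b
            have h3 : ∃ G2 ∈ AMPClass G0, G2.arrow a b := by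
              by_contra hno
              push_neg at hno
              exact hnEba ((harr b a).mpr ⟨⟨G1, hG1, h2⟩, hno⟩)
            obtain ⟨G2, hG2, h4⟩ := h3
            rcases arrowForm G2 hG2 c b hcb with h5 | h5
            · exact ⟨G2, hG2, hac, mkNadj G2 hG2, Or.inl ⟨h4, h5⟩⟩
            · exact ⟨G2, hG2, hac, mkNadj G2 hG2,
                Or.inr (Or.inl ⟨h4, G2.line_symm _ _ h5⟩)⟩
          · exact ⟨G1, hG1, hac, mkNadj G1 hG1, Or.inr (Or.inr ⟨h2, h1⟩)⟩
      obtain ⟨G1, hG1, ht1⟩ := hex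
      exact (hG1.2.2 a b c).mp ht1
    · -- G0 triplex → E triplex
      rintro ⟨hac, hnadj0, hcfg0⟩
      have hnadjE : ¬ E.adj a c := fun h => hnadj0 ((hskel a c).mp h)
      -- every member has the triplex
      have htG : ∀ G ∈ AMPClass G0, G.triplex a b c := by
        intro G hG
        exact (hG.2.2 a b c).mpr ⟨hac, hnadj0, hcfg0⟩
      -- no member has b → a
      have hnoba : ∀ G ∈ AMPClass G0, ¬ G.arrow b a := by
        intro G hG h
        rcases (htG G hG).2.2 with ⟨h1, h2⟩ | ⟨h1, h2⟩ | ⟨h1, h2⟩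
        · exact G.not_arrow_arrow a b h1 h
        · exact G.not_arrow_arrow a b h1 h
        · exact G.not_arrow_line b a h (G.line_symm _ _ h1)
      -- no member has b → c
      have hnobc : ∀ G ∈ AMPClass G0, ¬ G.arrow b c := by
        intro G hG h
        rcases (htG G hG).2.2 with ⟨h1, h2⟩ | ⟨h1, h2⟩ | ⟨h1, h2⟩
        · exact G.not_arrow_arrow c b h2 h
        · exact G.not_arrow_line b c h h2
        · exact G.not_arrow_arrow c b h2 h
      have hnEba : ¬ E.arrow b a := by
        intro h
        obtain ⟨⟨G1, hG1, h1⟩, -⟩ := (harr b a).mp h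
        exact hnoba G1 hG1 h1
      have hnEbc : ¬ E.arrow b c := by
        intro h
        obtain ⟨⟨G1, hG1, h1⟩, -⟩ := (harr b c).mp h
        exact hnobc G1 hG1 h1
      have hG0ab : G0.adj a b := by
        rcases hcfg0 with ⟨h1, -⟩ | ⟨h1, -⟩ | ⟨h1, -⟩
        · exact Or.inl h1
        · exact Or.inl h1
        · exact Or.inr (Or.inr h1)
      have hG0cb : G0.adj c b := by
        rcases hcfg0 with ⟨-, h2⟩ | ⟨-, h2⟩ | ⟨-, h2⟩
        · exact Or.inl h2
        · exact Or.inr (Or.inr (G0.line_symm _ _ h2))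
        · exact Or.inl h2
      have hEab : E.arrow a b ∨ E.line a b := by
        rcases (hskel a b).mpr hG0ab with h | h | h
        · exact Or.inl h
        · exact absurd h hnEba
        · exact Or.inr h
      have hEcb : E.arrow c b ∨ E.line c b := by
        rcases (hskel c b).mpr hG0cb with h | h | h
        · exact Or.inl h
        · exact absurd h hnEbc
        · exact Or.inr h
      -- not both lines
      have hnotboth : ¬ (E.line a b ∧ E.line c b) := by
        rintro ⟨hl1, hl2⟩
        obtain ⟨-, hnEab, -⟩ := (hline a b).mp hl1
        obtain ⟨-, hnEcb, -⟩ := (hline c b).mp hl2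
        have hnoab : ∀ G ∈ AMPClass G0, ¬ G.arrow a b := by
          by_contra hno
          push_neg at hno
          obtain ⟨G1, hG1, h1⟩ := hno
          exact hnEab ((harr a b).mpr ⟨⟨G1, hG1, h1⟩, hnoba⟩)
        have hnocb : ∀ G ∈ AMPClass G0, ¬ G.arrow c b := by
          by_contra hno
          push_neg at hno
          obtain ⟨G1, hG1, h1⟩ := hno
          exact hnEcb ((harr c b).mpr ⟨⟨G1, hG1, h1⟩, hnobc⟩)
        rcases hcfg0 with ⟨h1, h2⟩ | ⟨h1, h2⟩ | ⟨h1, h2⟩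
        · exact hnoab G0 hG0mem h1
        · exact hnoab G0 hG0mem h1
        · exact hnocb G0 hG0mem h2
      refine ⟨hac, hnadjE, ?_⟩
      rcases hEab with h1 | h1 <;> rcases hEcb with h2 | h2
      · exact Or.inl ⟨h1, h2⟩
      · exact Or.inr (Or.inl ⟨h1, E.line_symm _ _ h2⟩)
      · exact Or.inr (Or.inr ⟨h1, h2⟩)
      · exact absurd ⟨h1, h2⟩ hnotboth
  intro G hG a b c
  rw [key a b c]
  exact ((hG.2.2 a b c)).symm
end

section
/- With 𝒢 an AMP Markov equivalence class of chain graphs and 𝒢* its essential graph: a flag a→b−c occurs as an induced subgraph in 𝒢* if and only if it occurs (with the same vertices and orientations) in every member of 𝒢. In that case the arrow a→b occurs in every member of 𝒢 (it is strong) and the line b−c occurs in every member of 𝒢 (it is strong). -/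
/-- Lemma 3.2(a): a flag `a→b−c` occurs (as an induced subgraph) in the essential graph
iff it occurs in every member of the class; in that case `a→b` is a strong arrow and
`b−c` is a strong line. -/
theorem stmt6 {V : Type} (G0 E : MixedGraph V) (h0 : G0.IsChainGraph)
    (hE : IsEssentialGraph G0 E) (a b c : V) :
    ((E.arrow a b ∧ E.line b c ∧ ¬ E.adj a c) ↔
      ∀ G ∈ AMPClass G0, G.arrow a b ∧ G.line b c ∧ ¬ G.adj a c) ∧
    ((E.arrow a b ∧ E.line b c ∧ ¬ E.adj a c) →
      StrongArrow G0 E a b ∧ StrongLine G0 E b c) := by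
  obtain ⟨hskel, harr, hline⟩ := hE
  have hG0mem : G0 ∈ AMPClass G0 := ⟨h0, fun a b => Iff.rfl, fun a b c => Iff.rfl⟩
  -- Forward direction
  have fwd : (E.arrow a b ∧ E.line b c ∧ ¬ E.adj a c) →
      ∀ G ∈ AMPClass G0, G.arrow a b ∧ G.line b c ∧ ¬ G.adj a c := by
    rintro ⟨hab, hbc, hac⟩ G hG
    have hnba : ∀ G ∈ AMPClass G0, ¬ G.arrow b a := ((harr a b).1 hab).2
    obtain ⟨G1, hG1, hG1ab⟩ := ((harr a b).1 hab).1
    have hEnbc : ¬ E.arrow b c := ((hline b c).1 hbc).2.1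
    have hEncb : ¬ E.arrow c b := ((hline b c).1 hbc).2.2
    have hanc : a ≠ c := by
      rintro rfl
      exact E.not_arrow_line a b hab (E.line_symm b a hbc)
    have hG0adjbc : G0.adj b c := ((hline b c).1 hbc).1
    have hG0nadjac : ¬ G0.adj a c := fun h => hac ((hskel a c).2 h)
    -- triplex (a,b,c) holds in G0
    have htri : G0.triplex a b c := by
      have hG1adjbc : G1.adj b c := (hG1.2.1 b c).2 hG0adjbc
      have hG1nac : ¬ G1.adj a c := fun h => hG0nadjac ((hG1.2.1 a c).1 h)
      rcases hG1adjbc with h1 | h1 | h1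
      · -- G1 has b→c; show no member has c→b, so E would have b→c: contradiction
        exfalso
        have hnocb : ∀ G2 ∈ AMPClass G0, ¬ G2.arrow c b := by
          intro G2 hG2 h2
          -- G2 has a triplex (a,b,c)
          have hG2adjab : G2.adj a b := (hG2.2.1 a b).2 ((hG1.2.1 a b).1
            (Or.inl hG1ab))
          have hG2nac : ¬ G2.adj a c := fun h => hG0nadjac ((hG2.2.1 a c).1 h)
          have htri2 : G2.triplex a b c := by
            rcases hG2adjab with h3 | h3 | h3
            · exact ⟨hanc, hG2nac, Or.inl ⟨h3, h2⟩⟩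
            · exact absurd h3 (hnba G2 hG2)
            · exact ⟨hanc, hG2nac, Or.inr (Or.inr ⟨h3, h2⟩)⟩
          have htri1 : G1.triplex a b c := (hG1.2.2 a b c).2 ((hG2.2.2 a b c).1 htri2)
          rcases htri1.2.2 with ⟨_, h4⟩ | ⟨_, h4⟩ | ⟨_, h4⟩
          · exact G1.not_arrow_arrow b c h1 h4
          · exact G1.not_arrow_line b c h1 h4
          · exact G1.not_arrow_arrow b c h1 h4
        exact hEnbc ((harr b c).2 ⟨⟨G1, hG1, h1⟩, hnocb⟩)
      · exact (hG1.2.2 a b c).1 ⟨hanc, hG1nac, Or.inl ⟨hG1ab, h1⟩⟩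
      · exact (hG1.2.2 a b c).1 ⟨hanc, hG1nac, Or.inr (Or.inl ⟨hG1ab, h1⟩)⟩
    -- no member has b→c
    have hnobc : ∀ G2 ∈ AMPClass G0, ¬ G2.arrow b c := by
      intro G2 hG2 h2
      have htri2 : G2.triplex a b c := (hG2.2.2 a b c).2 htri
      rcases htri2.2.2 with ⟨_, h4⟩ | ⟨_, h4⟩ | ⟨_, h4⟩
      · exact G2.not_arrow_arrow b c h2 h4
      · exact G2.not_arrow_line b c h2 h4
      · exact G2.not_arrow_arrow b c h2 h4
    -- now conclude for G
    have htriG : G.triplex a b c := (hG.2.2 a b c).2 htri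
    have hGnac : ¬ G.adj a c := htriG.2.1
    rcases htriG.2.2 with ⟨h3, h4⟩ | ⟨h3, h4⟩ | ⟨h3, h4⟩
    · exact absurd ((harr c b).2 ⟨⟨G, hG, h4⟩, hnobc⟩) hEncb
    · exact ⟨h3, h4, hGnac⟩
    · exact absurd ((harr c b).2 ⟨⟨G, hG, h4⟩, hnobc⟩) hEncb
  have bwd : (∀ G ∈ AMPClass G0, G.arrow a b ∧ G.line b c ∧ ¬ G.adj a c) →
      (E.arrow a b ∧ E.line b c ∧ ¬ E.adj a c) := by
    intro h
    obtain ⟨h0ab, h0bc, h0ac⟩ := h G0 hG0mem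
    have hEab : E.arrow a b := (harr a b).2 ⟨⟨G0, hG0mem, h0ab⟩,
      fun G hG hba => G.not_arrow_arrow a b (h G hG).1 hba⟩
    have hEbc : E.line b c := (hline b c).2 ⟨Or.inr (Or.inr h0bc),
      fun hbc => by
        obtain ⟨⟨G, hG, hGbc⟩, _⟩ := (harr b c).1 hbc
        exact G.not_arrow_line b c hGbc (h G hG).2.1,
      fun hcb => by
        obtain ⟨⟨G, hG, hGcb⟩, _⟩ := (harr c b).1 hcb
        exact G.not_arrow_line c b hGcb (G.line_symm b c (h G hG).2.1)⟩
    exact ⟨hEab, hEbc, fun hadj => h0ac ((hskel a c).1 hadj)⟩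
  refine ⟨⟨fwd, bwd⟩, fun hflag => ?_⟩
  exact ⟨⟨hflag.1, fun G hG => (fwd hflag G hG).1⟩,
    ⟨hflag.2.1, fun G hG => (fwd hflag G hG).2.1⟩⟩
end

section
/- Every semi-directed cycle in the AMP essential graph 𝒢* contains at least one weak line, i.e., at least one line a−b such that a→b occurs in some member of 𝒢 (equivalently, a←b occurs in some member, since the edge is a line of 𝒢*). -/
/-- Lemma 3.4(a): every semi-directed cycle in the AMP essential graph contains at
least one weak line. -/
theorem stmt7 {V : Type} (G0 E : MixedGraph V) (h0 : G0.IsChainGraph)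
    (hE : IsEssentialGraph G0 E) :
    ∀ k v, E.IsSemiDirectedCycle k v → ∃ i, i < k ∧ WeakLine G0 E (v i) (v (i + 1)) := by
  intro k v hcyc
  by_contra hno
  push_neg at hno
  obtain ⟨hk, hvk, hstep, ⟨i0, hi0, harr⟩, hdist⟩ := hcyc
  obtain ⟨hskel, harrE, hlineE⟩ := hE
  -- the member G containing the arrow at position i0
  obtain ⟨⟨G, hG, hGarr⟩, _⟩ := (harrE _ _).1 harr
  -- step transfer lemma
  have key : ∀ a b, E.step a b → ¬ WeakLine G0 E a b → G.step a b := by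
    intro a b hab hw
    rcases hab with hA | hL
    · obtain ⟨⟨G', hG', hG'ab⟩, hrev⟩ := (harrE _ _).1 hA
      have hadj : G.adj a b := (hG.2.1 a b).2 ((hG'.2.1 a b).1 (Or.inl hG'ab))
      rcases hadj with h | h | h
      · exact Or.inl h
      · exact absurd h (hrev G hG)
      · exact Or.inr h
    · obtain ⟨hadj0, hnab, hnba⟩ := (hlineE a b).1 hL
      have hadj : G.adj a b := (hG.2.1 a b).2 hadj0
      have hnotboth : ¬ ((∃ G' ∈ AMPClass G0, G'.arrow a b) ∧
          ∃ G' ∈ AMPClass G0, G'.arrow b a) := fun h => hw ⟨hL, h.1, h.2⟩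
      rcases Classical.em (∃ G' ∈ AMPClass G0, G'.arrow a b) with hex | hnex
      · have hnex' : ¬ ∃ G' ∈ AMPClass G0, G'.arrow b a := fun h => hnotboth ⟨hex, h⟩
        rcases hadj with h | h | h
        · exact Or.inl h
        · exact absurd ⟨G, hG, h⟩ hnex'
        · exact Or.inr h
      · rcases hadj with h | h | h
        · exact absurd ⟨G, hG, h⟩ hnex
        · exact absurd ((harrE b a).2 ⟨⟨G, hG, h⟩,
            fun G' hG' hc => hnex ⟨G', hG', hc⟩⟩) hnba
        · exact Or.inr h
  exact hG.1 k v ⟨hk, hvk,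
    fun i hi => key _ _ (hstep i hi) (hno i hi),
    ⟨i0, hi0, hGarr⟩, hdist⟩
end

section
/- If a→b⇽d⇽a is a semi-directed 3-cycle in the AMP essential graph 𝒢* (that is, a→b is an arrow of 𝒢* and the edges between b,d and between d,a are lines or arrows making the cycle semi-directed with the arrow a→b), then there exist members G, G' of the equivalence class 𝒢 such that d→a and b←d occur in G while b→d and d←a occur in G'; consequently both edges b···d and d···a are weak lines of 𝒢*, so the cycle has the form a→b, b−d weak, d−a weak. -/
section Aux

variable {V : Type}

lemma MixedGraph.adj_ne (G : MixedGraph V) {x y : V} (h : G.adj x y) : x ≠ y := by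
  rintro rfl
  rcases h with h | h | h
  exacts [G.arrow_irrefl _ h, G.arrow_irrefl _ h, G.line_irrefl _ h]

/-- No semi-directed triangle in a chain graph. -/
lemma MixedGraph.no_cycle3 {G : MixedGraph V} (hG : G.IsChainGraph) {x y z : V}
    (hxy : G.step x y) (hyz : G.step y z) (hzx : G.step z x)
    (harr : G.arrow x y ∨ G.arrow y z ∨ G.arrow z x)
    (h1 : x ≠ y) (h2 : y ≠ z) (h3 : x ≠ z) : False := by
  apply hG 3 (fun i => if i % 3 = 0 then x else if i % 3 = 1 then y else z)
  refine ⟨le_refl 3, by norm_num, ?_, ?_, ?_⟩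
  · intro i hi
    interval_cases i <;> simpa using ‹_›
  · rcases harr with h | h | h
    · exact ⟨0, by norm_num, by simpa using h⟩
    · exact ⟨1, by norm_num, by simpa using h⟩
    · exact ⟨2, by norm_num, by simpa using h⟩
  · intro i j hij hj
    interval_cases j <;> interval_cases i <;> simp_all

/-- In a chain graph, if `x ⇒ y ⇒ z` with at least one arrow and `z, x` adjacent,
then the edge between `x` and `z` must be the arrow `x → z`. -/
lemma MixedGraph.third {G : MixedGraph V} (hG : G.IsChainGraph) {x y z : V}
    (h1 : G.step x y) (h2 : G.step y z) (harr : G.arrow x y ∨ G.arrow y z)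
    (hadj : G.adj z x) (n1 : x ≠ y) (n2 : y ≠ z) (n3 : x ≠ z) : G.arrow x z := by
  rcases hadj with h | h | h
  · exact absurd (MixedGraph.no_cycle3 hG h1 h2 (Or.inl h)
      (harr.elim Or.inl (fun h' => Or.inr (Or.inl h'))) n1 n2 n3) (fun f => f)
  · exact h
  · exact absurd (MixedGraph.no_cycle3 hG h1 h2 (Or.inr h)
      (harr.elim Or.inl (fun h' => Or.inr (Or.inl h'))) n1 n2 n3) (fun f => f)

end Aux

/-- Lemma 3.4(b): if `a→b ⇒ d ⇒ a` is a semi-directed 3-cycle in the essential graph,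
then some member contains `b←d→a` and some member contains `b→d←a`; hence both edges
`b···d` and `d···a` are weak lines of the essential graph. -/
theorem stmt8 {V : Type} (G0 E : MixedGraph V) (h0 : G0.IsChainGraph)
    (hE : IsEssentialGraph G0 E) (a b d : V) (hab : E.arrow a b)
    (hbd : E.arrow b d ∨ E.line b d) (hda : E.arrow d a ∨ E.line d a) :
    (∃ G ∈ AMPClass G0, G.arrow d b ∧ G.arrow d a) ∧
    (∃ G ∈ AMPClass G0, G.arrow b d ∧ G.arrow a d) ∧
    WeakLine G0 E b d ∧ WeakLine G0 E d a := by
  obtain ⟨hskelE, harrE, hlineE⟩ := hE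
  -- a member with arrow a → b
  obtain ⟨⟨G1, hG1, hG1ab⟩, hnoba⟩ := (harrE a b).mp hab
  have memAdj : ∀ G ∈ AMPClass G0, ∀ x y : V, G0.adj x y → G.adj x y :=
    fun G hG x y h => (hG.2.1 x y).mpr h
  -- adjacency facts in G0
  have adjab : G0.adj a b := (hG1.2.1 a b).mp (Or.inl hG1ab)
  have adjbd : G0.adj b d := by
    rcases hbd with h | h
    · obtain ⟨⟨G', hG', harr'⟩, -⟩ := (harrE b d).mp h
      exact (hG'.2.1 b d).mp (Or.inl harr')
    · exact ((hlineE b d).mp h).1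
  have adjda : G0.adj d a := by
    rcases hda with h | h
    · obtain ⟨⟨G', hG', harr'⟩, -⟩ := (harrE d a).mp h
      exact (hG'.2.1 d a).mp (Or.inl harr')
    · exact ((hlineE d a).mp h).1
  have nab : a ≠ b := G0.adj_ne adjab
  have nbd : b ≠ d := G0.adj_ne adjbd
  have nda : d ≠ a := G0.adj_ne adjda
  -- every member has step a ⇒ b
  have stepab : ∀ G ∈ AMPClass G0, G.step a b := by
    intro G hG
    rcases memAdj G hG a b adjab with h | h | h
    · exact Or.inl h
    · exact absurd h (hnoba G hG)
    · exact Or.inr h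
  -- flipping lemma
  have flip : ∀ x y : V, ¬ E.arrow x y → (∃ G ∈ AMPClass G0, G.arrow x y) →
      ∃ G ∈ AMPClass G0, G.arrow y x := by
    intro x y hne hex
    by_contra h
    push_neg at h
    exact hne ((harrE x y).mpr ⟨hex, h⟩)
  -- rule out E.arrow b d
  have hnbd : ¬ E.arrow b d := by
    intro hEbd
    obtain ⟨-, hnodb⟩ := (harrE b d).mp hEbd
    have stepbd : ∀ G ∈ AMPClass G0, G.step b d := by
      intro G hG
      rcases memAdj G hG b d adjbd with h | h | h
      · exact Or.inl h
      · exact absurd h (hnodb G hG)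
      · exact Or.inr h
    rcases hda with hEda | hlda
    · obtain ⟨-, hnoad⟩ := (harrE d a).mp hEda
      have stepda : G1.step d a := by
        rcases memAdj G1 hG1 d a adjda with h | h | h
        · exact Or.inl h
        · exact absurd h (hnoad G1 hG1)
        · exact Or.inr h
      exact G1.no_cycle3 hG1.1 (Or.inl hG1ab) (stepbd G1 hG1) stepda
        (Or.inl hG1ab) nab nbd nda.symm
    · have had : G1.arrow a d :=
        MixedGraph.third hG1.1 (Or.inl hG1ab) (stepbd G1 hG1) (Or.inl hG1ab)
          (memAdj G1 hG1 d a adjda) nab nbd nda.symm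
      obtain ⟨G', hG', hG'da⟩ := flip a d ((hlineE d a).mp hlda).2.2 ⟨G1, hG1, had⟩
      exact MixedGraph.no_cycle3 hG'.1 (stepab G' hG') (stepbd G' hG')
        (Or.inl hG'da) (Or.inr (Or.inr hG'da)) nab nbd nda.symm
  -- rule out E.arrow d a
  have hnda : ¬ E.arrow d a := by
    intro hEda
    obtain ⟨-, hnoad⟩ := (harrE d a).mp hEda
    have stepda : ∀ G ∈ AMPClass G0, G.step d a := by
      intro G hG
      rcases memAdj G hG d a adjda with h | h | h
      · exact Or.inl h
      · exact absurd h (hnoad G hG)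
      · exact Or.inr h
    have hlbd : E.line b d := hbd.resolve_left hnbd
    have hdb : G1.arrow d b :=
      MixedGraph.third hG1.1 (stepda G1 hG1) (stepab G1 hG1) (Or.inr hG1ab)
        (memAdj G1 hG1 b d adjbd) nda nab nbd.symm
    obtain ⟨G', hG', hG'bd⟩ := flip d b ((hlineE b d).mp hlbd).2.2 ⟨G1, hG1, hdb⟩
    exact MixedGraph.no_cycle3 hG'.1 (stepab G' hG') (Or.inl hG'bd)
      (stepda G' hG') (Or.inr (Or.inl hG'bd)) nab nbd nda.symm
  have hlbd : E.line b d := hbd.resolve_left hnbd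
  have hlda : E.line d a := hda.resolve_left hnda
  have hnEdb : ¬ E.arrow d b := ((hlineE b d).mp hlbd).2.2
  have hnEad : ¬ E.arrow a d := ((hlineE d a).mp hlda).2.2
  -- Step 1: some member has arrow a → d
  have step1 : ∃ G ∈ AMPClass G0, G.arrow a d := by
    rcases memAdj G1 hG1 b d adjbd with h | h | h
    · exact ⟨G1, hG1, MixedGraph.third hG1.1 (Or.inl hG1ab) (Or.inl h)
        (Or.inl hG1ab) (memAdj G1 hG1 d a adjda) nab nbd nda.symm⟩
    · obtain ⟨G2, hG2, hG2bd⟩ := flip d b hnEdb ⟨G1, hG1, h⟩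
      exact ⟨G2, hG2, MixedGraph.third hG2.1 (stepab G2 hG2) (Or.inl hG2bd)
        (Or.inr hG2bd) (memAdj G2 hG2 d a adjda) nab nbd nda.symm⟩
    · exact ⟨G1, hG1, MixedGraph.third hG1.1 (Or.inl hG1ab) (Or.inr h)
        (Or.inl hG1ab) (memAdj G1 hG1 d a adjda) nab nbd nda.symm⟩
  -- Step 2: a member G3 with d → a, which then also has d → b
  obtain ⟨G3, hG3, hG3da⟩ := flip a d hnEad step1
  have hG3db : G3.arrow d b :=
    MixedGraph.third hG3.1 (Or.inl hG3da) (stepab G3 hG3) (Or.inl hG3da)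
      (memAdj G3 hG3 b d adjbd) nda nab nbd.symm
  -- Step 3: a member G4 with b → d, which then also has a → d
  obtain ⟨G4, hG4, hG4bd⟩ := flip d b hnEdb ⟨G3, hG3, hG3db⟩
  have hG4ad : G4.arrow a d :=
    MixedGraph.third hG4.1 (stepab G4 hG4) (Or.inl hG4bd) (Or.inr hG4bd)
      (memAdj G4 hG4 d a adjda) nab nbd nda.symm
  exact ⟨⟨G3, hG3, hG3db, hG3da⟩, ⟨G4, hG4, hG4bd, hG4ad⟩,
    ⟨hlbd, ⟨G4, hG4, hG4bd⟩, ⟨G3, hG3, hG3db⟩⟩,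
    ⟨hlda, ⟨G3, hG3, hG3da⟩, step1⟩⟩
end

section
/- Let 𝒢* be the AMP essential graph of an equivalence class 𝒢, and let Σ be the partition of the vertex set into strong-equivalence classes (connected components of the graph of strong lines of 𝒢*). If a ∈ α and b ∈ β for distinct classes α, β ∈ Σ, and a−b is a weak line of 𝒢*, then a'−b' is a weak line of 𝒢* for every pair a' ∈ α, b' ∈ β that is adjacent in 𝒢*, and moreover the induced subgraphs of 𝒢* on α and on β are complete. -/
/-- Two vertices are strongly equivalent if joined by a path of strong lines. -/
def StronglyEquiv {V : Type} (G0 E : MixedGraph V) (x y : V) : Prop :=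
  Relation.ReflTransGen (StrongLine G0 E) x y



/-!
Two chain-graph facts drive everything: no triplex `(x, b, c)` has an arrow `b → c`, and
a triangle with two steps and one closing arrow is a semi-directed cycle. Let `a − b` be weak,
witnessed by members `G₁ ∋ a → b` and `G₂ ∋ b → a`, and let `a − a'` be strong. If `a'` and `b`
were nonadjacent, `a' − a ← b` would be a triplex of `G₂` but not of `G₁`; so they are adjacent,
and the triangle rule forces `a' → b` in `G₁` and `b → a'` in `G₂`, making `a' − b` weak too.
Propagating along strong paths on both sides gives the first claim. For completeness, take
nonadjacent `a', a''` in the class of `a`, and a member with `a' → b`: the triangle rule carries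
the arrow into `b` along the strong path to `a''`, while the triplex rule (no triplex
`(a'', b, a')` can exist, as `a' − b` is weak) forces `b → a''`.
-/

namespace MixedGraph

variable {V : Type} {G : MixedGraph V} {a b c x y z : V}

theorem adj.symm (h : G.adj x y) : G.adj y x := by
  rcases h with h | h | h
  · exact Or.inr (Or.inl h)
  · exact Or.inl h
  · exact Or.inr (Or.inr (G.line_symm _ _ h))

theorem step.ne (h : G.step x y) : x ≠ y := by
  rintro rfl
  exact h.elim (G.arrow_irrefl x) (G.line_irrefl x)

theorem arrow_of_adj_of_not_step (h : G.adj x y) (hs : ¬ G.step y x) : G.arrow x y := by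
  rcases h with h | h | h
  · exact h
  · exact absurd (Or.inl h) hs
  · exact absurd (Or.inr (G.line_symm _ _ h)) hs

theorem not_triplex_of_arrow (h : G.arrow b c) : ¬ G.triplex a b c := by
  rintro ⟨-, -, ⟨-, h'⟩ | ⟨-, h'⟩ | ⟨-, h'⟩⟩
  · exact G.not_arrow_arrow _ _ h h'
  · exact G.not_arrow_line _ _ h h'
  · exact G.not_arrow_arrow _ _ h h'

theorem IsChainGraph.not_triangle (hG : G.IsChainGraph) (hxy : G.step x y) (hyz : G.step y z)
    (hzx : G.arrow z x) : False := by
  have hzx' : G.step z x := Or.inl hzx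
  apply hG 3 fun i => if i = 1 then y else if i = 2 then z else x
  refine ⟨le_rfl, rfl, fun i hi => ?_, ⟨2, by norm_num, by simpa using hzx⟩, fun i j hij hj => ?_⟩
  · interval_cases i <;> simpa
  · interval_cases j <;> interval_cases i
    · simpa using hxy.ne
    · simpa using hzx'.ne.symm
    · simpa using hyz.ne

theorem IsChainGraph.arrow_of_arrow_of_line_tail (hG : G.IsChainGraph) (hcb : G.arrow c b)
    (hca : G.line c a) (hadj : G.adj a b) : G.arrow a b :=
  arrow_of_adj_of_not_step hadj fun hba => hG.not_triangle hba (Or.inr (G.line_symm _ _ hca)) hcb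

theorem IsChainGraph.arrow_of_arrow_of_line_head (hG : G.IsChainGraph) (hbc : G.arrow b c)
    (hca : G.line c a) (hadj : G.adj b a) : G.arrow b a :=
  arrow_of_adj_of_not_step hadj fun hab => hG.not_triangle (Or.inr hca) hab hbc

end MixedGraph

open MixedGraph

section EssentialGraph

variable {V : Type} {G0 E G H : MixedGraph V} {a a' a'' b x y : V}

theorem AMPClass.triplex_iff (hG : G ∈ AMPClass G0) (hH : H ∈ AMPClass G0) :
    G.triplex a b x ↔ H.triplex a b x :=
  (hG.2.2 a b x).trans (hH.2.2 a b x).symm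

theorem IsEssentialGraph.adj_iff (hE : IsEssentialGraph G0 E) (hG : G ∈ AMPClass G0) :
    E.adj x y ↔ G.adj x y :=
  (hE.1 x y).trans (hG.2.1 x y).symm

theorem IsEssentialGraph.weakLine_of_arrow_of_arrow (hE : IsEssentialGraph G0 E)
    (hG : G ∈ AMPClass G0) (hH : H ∈ AMPClass G0) (hxy : G.arrow x y) (hyx : H.arrow y x) :
    WeakLine G0 E x y := by
  have hadj : G0.adj x y := (hG.2.1 x y).1 (Or.inl hxy)
  have hnxy : ¬ E.arrow x y := fun h => ((hE.2.1 x y).1 h).2 H hH hyx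
  have hnyx : ¬ E.arrow y x := fun h => ((hE.2.1 y x).1 h).2 G hG hxy
  exact ⟨(hE.2.2 x y).2 ⟨hadj, hnxy, hnyx⟩, ⟨G, hG, hxy⟩, ⟨H, hH, hyx⟩⟩

theorem StrongLine.symm (h : StrongLine G0 E x y) : StrongLine G0 E y x :=
  ⟨E.line_symm _ _ h.1, fun G hG => G.line_symm _ _ (h.2 G hG)⟩

theorem StronglyEquiv.symm (h : StronglyEquiv G0 E x y) : StronglyEquiv G0 E y x :=
  Relation.ReflTransGen.mono (fun _ _ => StrongLine.symm) _ _ (Relation.ReflTransGen.swap _ _ h)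

theorem WeakLine.symm (h : WeakLine G0 E x y) : WeakLine G0 E y x :=
  ⟨E.line_symm _ _ h.1, h.2.2, h.2.1⟩

theorem WeakLine.adj (h : WeakLine G0 E x y) : E.adj x y :=
  Or.inr (Or.inr h.1)

theorem IsEssentialGraph.weakLine_of_strongLine (hE : IsEssentialGraph G0 E)
    (hs : StrongLine G0 E a a') (hw : WeakLine G0 E a b) (hne : a' ≠ b) :
    WeakLine G0 E a' b := by
  obtain ⟨-, ⟨G₁, hG₁, hab⟩, ⟨G₂, hG₂, hba⟩⟩ := hw
  have hadj : E.adj a' b := by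
    by_contra hna
    have ht : G₂.triplex a' a b :=
      ⟨hne, fun h => hna ((hE.adj_iff hG₂).2 h),
        Or.inr (Or.inr ⟨G₂.line_symm _ _ (hs.2 G₂ hG₂), hba⟩)⟩
    exact not_triplex_of_arrow hab ((AMPClass.triplex_iff hG₂ hG₁).1 ht)
  exact hE.weakLine_of_arrow_of_arrow hG₁ hG₂
    (hG₁.1.arrow_of_arrow_of_line_tail hab (hs.2 G₁ hG₁) ((hE.adj_iff hG₁).1 hadj))
    (hG₂.1.arrow_of_arrow_of_line_head hba (hs.2 G₂ hG₂) ((hE.adj_iff hG₂).1 hadj.symm))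

theorem IsEssentialGraph.weakLine_of_stronglyEquiv (hE : IsEssentialGraph G0 E)
    (ha : StronglyEquiv G0 E a a') (hdist : ¬ StronglyEquiv G0 E a b)
    (hw : WeakLine G0 E a b) : WeakLine G0 E a' b := by
  induction ha with
  | refl => exact hw
  | tail hac hcc' ih =>
    exact hE.weakLine_of_strongLine hcc' ih fun h => hdist (h ▸ hac.tail hcc')

theorem IsEssentialGraph.arrow_of_stronglyEquiv (hE : IsEssentialGraph G0 E)
    (hG : G ∈ AMPClass G0) (ha : StronglyEquiv G0 E a' a'')
    (hadj : ∀ c, StronglyEquiv G0 E a' c → E.adj c b) (harr : G.arrow a' b) :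
    G.arrow a'' b := by
  induction ha with
  | refl => exact harr
  | tail hac hcc' ih =>
    exact hG.1.arrow_of_arrow_of_line_tail ih (hcc'.2 G hG)
      ((hE.adj_iff hG).1 (hadj _ (hac.tail hcc')))

theorem IsEssentialGraph.arrow_of_weakLine_of_not_adj (hE : IsEssentialGraph G0 E)
    (hG : G ∈ AMPClass G0) (hne : a'' ≠ a') (hna : ¬ E.adj a'' a') (hw : WeakLine G0 E a' b)
    (hadj : E.adj a'' b) (harr : G.arrow a' b) : G.arrow b a'' := by
  obtain ⟨H, hH, hba'⟩ := hw.2.2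
  have hnt : ¬ G.triplex a'' b a' := fun h =>
    not_triplex_of_arrow hba' ((AMPClass.triplex_iff hG hH).1 h)
  have hna' : ¬ G.adj a'' a' := fun h => hna ((hE.adj_iff hG).2 h)
  rcases (hE.adj_iff hG).1 hadj with h | h | h
  · exact absurd ⟨hne, hna', Or.inl ⟨h, harr⟩⟩ hnt
  · exact h
  · exact absurd ⟨hne, hna', Or.inr (Or.inr ⟨h, harr⟩)⟩ hnt

theorem IsEssentialGraph.adj_of_stronglyEquiv_of_weakLine (hE : IsEssentialGraph G0 E)
    (hdist : ¬ StronglyEquiv G0 E a b) (hw : WeakLine G0 E a b)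
    (ha' : StronglyEquiv G0 E a a') (ha'' : StronglyEquiv G0 E a a'') (hne : a' ≠ a'') :
    E.adj a' a'' := by
  by_contra hna
  have hweak : ∀ c, StronglyEquiv G0 E a c → WeakLine G0 E c b := fun c hc =>
    hE.weakLine_of_stronglyEquiv hc hdist hw
  obtain ⟨G, hG, harr⟩ := (hweak a' ha').2.1
  have hout : G.arrow b a'' :=
    hE.arrow_of_weakLine_of_not_adj hG hne.symm (fun h => hna h.symm) (hweak a' ha')
      (hweak a'' ha'').adj harr
  have hin : G.arrow a'' b :=
    hE.arrow_of_stronglyEquiv hG (ha'.symm.trans ha'')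
      (fun c hc => (hweak c (ha'.trans hc)).adj) harr
  exact G.not_arrow_arrow _ _ hin hout

end EssentialGraph

theorem stmt10_general {V : Type} (G0 E : MixedGraph V)
    (hE : IsEssentialGraph G0 E) (a b : V)
    (hdist : ¬ StronglyEquiv G0 E a b) (hw : WeakLine G0 E a b) :
    (∀ a' b', StronglyEquiv G0 E a a' → StronglyEquiv G0 E b b' → E.adj a' b' →
      WeakLine G0 E a' b') ∧
    (∀ a' a'', StronglyEquiv G0 E a a' → StronglyEquiv G0 E a a'' → a' ≠ a'' →
      E.adj a' a'') ∧
    (∀ b' b'', StronglyEquiv G0 E b b' → StronglyEquiv G0 E b b'' → b' ≠ b'' →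
      E.adj b' b'') := by
  have hdist' : ¬ StronglyEquiv G0 E b a := fun h => hdist h.symm
  refine ⟨fun a' b' ha hb _ => ?_, fun _ _ => hE.adj_of_stronglyEquiv_of_weakLine hdist hw,
    fun _ _ => hE.adj_of_stronglyEquiv_of_weakLine hdist' hw.symm⟩
  have hw' : WeakLine G0 E a' b := hE.weakLine_of_stronglyEquiv ha hdist hw
  have hdist'' : ¬ StronglyEquiv G0 E b a' := fun h => hdist (ha.trans h.symm)
  exact (hE.weakLine_of_stronglyEquiv hb hdist'' hw'.symm).symm

/-- Lemma 3.6(d): if `a−b` is a weak line of the essential graph between distinct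
strong-equivalence classes `α = [a]` and `β = [b]`, then every `𝒢*`-adjacent pair
`a' ∈ α`, `b' ∈ β` is joined by a weak line, and the induced subgraphs on `α` and
on `β` are complete. -/
theorem stmt10 {V : Type} (G0 E : MixedGraph V) (h0 : G0.IsChainGraph)
    (hE : IsEssentialGraph G0 E) (a b : V)
    (hdist : ¬ StronglyEquiv G0 E a b) (hw : WeakLine G0 E a b) :
    (∀ a' b', StronglyEquiv G0 E a a' → StronglyEquiv G0 E b b' → E.adj a' b' →
      WeakLine G0 E a' b') ∧
    (∀ a' a'', StronglyEquiv G0 E a a' → StronglyEquiv G0 E a a'' → a' ≠ a'' →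
      E.adj a' a'') ∧
    (∀ b' b'', StronglyEquiv G0 E b b' → StronglyEquiv G0 E b b'' → b' ≠ b'' →
      E.adj b' b'') :=
  stmt10_general G0 E hE a b hdist hw
end
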